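/- arXiv:2302.00304 — 10 statements merged into one kernel-verified Lean document; each statement's English description precedes it below -/
import Mathlib

section
/- Fix integers n ≥ 1, ω ≥ 1 and 1 ≤ k ≤ n. For a tuple ℓ = (ℓ_j)_{j∈ℤ/nℤ} of integers with 0 ≤ ℓ_j ≤ ωn, the following are equivalent: (1) for every i ∈ ℤ/nℤ, Σ_{j ∈ ℤ/nℤ} #{s ∈ {1,…,ℓ_j} : j + s ≡ i (mod n)} = kω; (2) Σ_{j ∈ ℤ/nℤ} ℓ_j = kωn and the map ℤ/nℤ → ℤ/nℤ, j ↦ j + ℓ_j (mod n), is a bijection. In other words, D(k,n,ω) = C(k,n,ω). -/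
open Finset

/-! Write `F i` for the left-hand side of (1). Moving from `i` to `i + 1` shifts every step
`s` of `j` to `s - 1`: the contribution of `j` loses its last step `j + ℓ j` and gains `j`
itself, so `F (i + 1) + #{j | j + ℓ j = i} = F i + 1`. Hence `F` is constant exactly when
every fibre of `j ↦ j + ℓ j` is a singleton, and since `∑ i, F i = ∑ j, ℓ j`, the constant is
`kω` exactly when `∑ j, ℓ j = kωn`. -/

theorem Function.bijective_iff_card_filter_eq_one {α β : Type*} [Fintype α] [DecidableEq β]
    (f : α → β) : Function.Bijective f ↔ ∀ b, #{a | f a = b} = 1 := by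
  simp only [Function.bijective_iff_existsUnique, card_eq_one, eq_singleton_iff_unique_mem,
    mem_filter, mem_univ, true_and]
  rfl

theorem ZMod.apply_eq_apply_zero_of_periodic_one {n : ℕ} {α : Type*} {f : ZMod n → α}
    (h : Function.Periodic f 1) (i : ZMod n) : f i = f 0 := by
  obtain ⟨m, rfl⟩ := ZMod.intCast_surjective i
  simpa using h.int_mul m 0

section CoverCount

variable {R : Type*} [AddGroupWithOne R] [DecidableEq R]

-- Both sides count the `s ∈ [0, L]` with `j + s = i`.
theorem card_filter_Icc_add_eq_add_one_add_ite (j i : R) (L : ℕ) :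
    #((Icc 1 L).filter fun s : ℕ => j + (s : R) = i + 1) + (if j + (L : R) = i then 1 else 0) =
      #((Icc 1 L).filter fun s : ℕ => j + (s : R) = i) + (if j = i then 1 else 0) := by
  induction L with
  | zero => simp
  | succ L ih =>
    have hshift : j + ((L + 1 : ℕ) : R) = i + 1 ↔ j + L = i := by
      rw [Nat.cast_succ, ← add_assoc, add_left_inj]
    rw [card_filter, card_filter] at ih ⊢
    rw [sum_Icc_succ_top (by omega), sum_Icc_succ_top (by omega)]
    simp only [hshift]
    omega

variable [Fintype R]

def coverCount (ℓ : R → ℕ) (i : R) : ℕ :=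
  ∑ j, #((Icc 1 (ℓ j)).filter fun s : ℕ => j + (s : R) = i)

theorem sum_coverCount (ℓ : R → ℕ) : ∑ i, coverCount ℓ i = ∑ j, ℓ j := by
  simp only [coverCount]
  rw [sum_comm]
  refine sum_congr rfl fun j _ => ?_
  rw [← card_eq_sum_card_fiberwise fun _ _ => mem_univ _, Nat.card_Icc, Nat.add_sub_cancel]

theorem sum_eq_card_mul_of_coverCount_eq {ℓ : R → ℕ} {c : ℕ} (h : ∀ i, coverCount ℓ i = c) :
    ∑ j, ℓ j = Fintype.card R * c := by
  rw [← sum_coverCount, Fintype.sum_congr _ _ h, sum_const, card_univ, smul_eq_mul]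

theorem coverCount_add_one_add_card_fiber (ℓ : R → ℕ) (i : R) :
    coverCount ℓ (i + 1) + #{j | j + (ℓ j : R) = i} = coverCount ℓ i + 1 := by
  rw [coverCount, coverCount, card_filter, ← sum_add_distrib]
  simp only [card_filter_Icc_add_eq_add_one_add_ite, sum_add_distrib, sum_ite_eq', mem_univ,
    if_true]

end CoverCount

theorem Dtuples_eq_Ctuples_general
    (n ω k : ℕ) [NeZero n]
    (ℓ : ZMod n → ℕ) :
    (∀ i : ZMod n,
        (∑ j : ZMod n,
          ((Finset.Icc 1 (ℓ j)).filter fun s : ℕ => j + (s : ZMod n) = i).card) = k * ω) ↔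
      ((∑ j : ZMod n, ℓ j) = k * ω * n ∧
        Function.Bijective fun j : ZMod n => j + (ℓ j : ZMod n)) := by
  change (∀ i, coverCount ℓ i = k * ω) ↔ _
  have hstep := coverCount_add_one_add_card_fiber ℓ
  rw [Function.bijective_iff_card_filter_eq_one]
  constructor
  · intro hconst
    refine ⟨?_, fun i => by have := hstep i; rw [hconst, hconst] at this; omega⟩
    rw [sum_eq_card_mul_of_coverCount_eq hconst, ZMod.card, mul_comm]
  · rintro ⟨htotal, hfiber⟩
    have hconst : ∀ i, coverCount ℓ i = coverCount ℓ 0 :=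
      ZMod.apply_eq_apply_zero_of_periodic_one fun i => by
        have := hstep i; rw [hfiber] at this; omega
    have hn : n * coverCount ℓ 0 = n * (k * ω) :=
      calc n * coverCount ℓ 0 = ∑ j, ℓ j := by
            rw [sum_eq_card_mul_of_coverCount_eq hconst, ZMod.card]
        _ = n * (k * ω) := by rw [htotal, mul_comm]
    exact fun i => (hconst i).trans (Nat.eq_of_mul_eq_mul_left (NeZero.pos n) hn)

/-- For a length tuple `ℓ : ℤ/nℤ → ℕ` with `ℓ j ≤ ωn` for all `j`, the
dimension-vector condition defining `D(k,n,ω)` is equivalent to the pair of conditions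
defining `C(k,n,ω)`: the total sum is `kωn` and `j ↦ j + ℓ j (mod n)` is a bijection
of `ℤ/nℤ`. In other words, `D(k,n,ω) = C(k,n,ω)`. -/
theorem Dtuples_eq_Ctuples
    (n ω k : ℕ) [NeZero n] (hω : 1 ≤ ω) (hk : 1 ≤ k) (hkn : k ≤ n)
    (ℓ : ZMod n → ℕ) (hbound : ∀ j, ℓ j ≤ ω * n) :
    (∀ i : ZMod n,
        (∑ j : ZMod n,
          ((Finset.Icc 1 (ℓ j)).filter fun s : ℕ => j + (s : ZMod n) = i).card) = k * ω) ↔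
      ((∑ j : ZMod n, ℓ j) = k * ω * n ∧
        Function.Bijective fun j : ZMod n => j + (ℓ j : ZMod n)) :=
  Dtuples_eq_Ctuples_general n ω k ℓ
end

section
/- Fix integers n ≥ 1, ω ≥ 1 and 1 ≤ k ≤ n. Let ℓ ∈ C(k,n,ω), let i, j ∈ ℤ/nℤ be distinct and let r be an integer with 0 ≤ r ≤ min(ℓ_i, ωn − ℓ_j) and i + ℓ_i ≡ j + ℓ_j + r (mod n). Then the tuple f_{i,j,r}(ℓ), obtained from ℓ by replacing ℓ_i with ℓ_i − r and ℓ_j with ℓ_j + r and keeping all other entries, again lies in C(k,n,ω). -/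
/-- The set `C(k,n,ω)` of length tuples: `ℓ : ℤ/nℤ → ℕ` with `ℓ j ≤ ωn`, total sum `kωn`,
such that `j ↦ j + ℓ j (mod n)` is a bijection of `ℤ/nℤ`. -/
def Ctuples (n ω k : ℕ) [NeZero n] : Set (ZMod n → ℕ) :=
  {ℓ | (∀ j, ℓ j ≤ ω * n) ∧ (∑ j : ZMod n, ℓ j) = k * ω * n ∧
       Function.Bijective fun j : ZMod n => j + (ℓ j : ZMod n)}

/-- The cut-and-paste move `f_{i,j,r}`: replace `ℓ i` by `ℓ i − r` and `ℓ j` by `ℓ j + r`,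
keeping all other entries. -/
def cutPaste (n : ℕ) (ℓ : ZMod n → ℕ) (i j : ZMod n) (r : ℕ) : ZMod n → ℕ :=
  fun s => if s = i then ℓ i - r else if s = j then ℓ j + r else ℓ s

/-- The cut-and-paste moves preserve `C(k,n,ω)`: if `ℓ ∈ C(k,n,ω)`,
`i ≠ j`, `0 ≤ r ≤ min(ℓ i, ωn − ℓ j)` and `i + ℓ i ≡ j + ℓ j + r (mod n)`, then
`f_{i,j,r}(ℓ) ∈ C(k,n,ω)`. -/
theorem cutPaste_mem_Ctuples
    (n ω k : ℕ) [NeZero n] (hω : 1 ≤ ω) (hk : 1 ≤ k) (hkn : k ≤ n)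
    (ℓ : ZMod n → ℕ) (hℓ : ℓ ∈ Ctuples n ω k)
    (i j : ZMod n) (hij : i ≠ j) (r : ℕ)
    (hr1 : r ≤ ℓ i) (hr2 : ℓ j + r ≤ ω * n)
    (hcong : i + (ℓ i : ZMod n) = j + (ℓ j : ZMod n) + (r : ZMod n)) :
    cutPaste n ℓ i j r ∈ Ctuples n ω k := by
  obtain ⟨hbd, hsum, hbij⟩ := hℓ
  refine ⟨?_, ?_, ?_⟩
  · intro s
    by_cases hsi : s = i
    · simp only [cutPaste, hsi, if_pos rfl]
      exact le_trans (Nat.sub_le _ _) (hbd i)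
    · by_cases hsj : s = j
      · subst hsj
        simpa only [cutPaste, if_neg hsi, if_pos rfl, ↓reduceIte] using hr2
      · simpa only [cutPaste, if_neg hsi, if_neg hsj] using hbd s
  · -- sum is preserved
    have hi : i ∈ (Finset.univ : Finset (ZMod n)) := Finset.mem_univ i
    have hj : j ∈ (Finset.univ : Finset (ZMod n)).erase i :=
      Finset.mem_erase.2 ⟨Ne.symm hij, Finset.mem_univ j⟩
    have key : ∀ f : ZMod n → ℕ,
        ∑ s : ZMod n, f s = f i + (f j + ∑ s ∈ (Finset.univ.erase i).erase j, f s) := by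
      intro f
      rw [← Finset.add_sum_erase _ f hi, ← Finset.add_sum_erase _ f hj]
    have hrest : ∑ s ∈ (Finset.univ.erase i).erase j, cutPaste n ℓ i j r s
        = ∑ s ∈ (Finset.univ.erase i).erase j, ℓ s := by
      apply Finset.sum_congr rfl
      intro s hs
      simp only [Finset.mem_erase, Finset.mem_univ, and_true] at hs
      obtain ⟨hsj, hsi⟩ := hs
      simp [cutPaste, hsi, hsj]
    rw [key (cutPaste n ℓ i j r), hrest]
    have h1 : cutPaste n ℓ i j r i = ℓ i - r := by simp [cutPaste]
    have h2 : cutPaste n ℓ i j r j = ℓ j + r := by simp [cutPaste, Ne.symm hij]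
    rw [h1, h2, ← hsum, key ℓ]
    omega
  · -- bijectivity
    have hcast : ((ℓ i - r : ℕ) : ZMod n) = (ℓ i : ZMod n) - (r : ZMod n) := by
      exact_mod_cast Nat.cast_sub hr1
    have hfun : (fun s : ZMod n => s + (cutPaste n ℓ i j r s : ZMod n))
        = (Equiv.swap (i + (ℓ i : ZMod n)) (j + (ℓ j : ZMod n))) ∘
          (fun s : ZMod n => s + (ℓ s : ZMod n)) := by
      funext s
      by_cases hsi : s = i
      · rw [hsi]
        simp only [Function.comp, Equiv.swap_apply_left]
        rw [show cutPaste n ℓ i j r i = ℓ i - r from by simp [cutPaste], hcast,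
          ← add_sub_assoc, hcong]
        ring
      · by_cases hsj : s = j
        · rw [hsj]
          simp only [Function.comp, Equiv.swap_apply_right]
          rw [show cutPaste n ℓ i j r j = ℓ j + r from by simp [cutPaste, Ne.symm hij],
            Nat.cast_add, hcong]
          ring
        · simp only [cutPaste, if_neg hsi, if_neg hsj, Function.comp]
          rw [Equiv.swap_apply_of_ne_of_ne]
          · intro h
            exact hsi (hbij.injective h)
          · intro h
            exact hsj (hbij.injective h)
    rw [hfun]
    exact (Equiv.swap _ _).bijective.comp hbij
end

section
/- Fix integers n ≥ 1, ω ≥ 1 and 1 ≤ k ≤ n. Let ℓ ∈ C(k,n,ω) and let f : ℤ → ℤ be the corresponding bounded affine permutation, f(a) = a + ℓ_{a mod n}. Then the number of triples (i,j,r) with i, j ∈ ℤ/nℤ and r an integer satisfying 1 ≤ r ≤ min(ℓ_i, ωn − ℓ_j), i + ℓ_i ≡ j + ℓ_j + r (mod n) and ℓ_i > ℓ_j + r (i.e. the number of moment-graph edges starting at ℓ) equals l(f) := #{(a,b) ∈ {1,…,n} × ℤ : a < b and f(a) > f(b)}. -/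
/-!
The inversion `(a, b)` of `f` corresponds to the edge `(a mod n, b mod n, f a - f b)`.
Since `a` runs over a system of residues mod `n`, it is recovered from `a mod n`; and since
`f b = b + ℓ (b mod n)`, the position `b` is recovered from `f b = f a - r` and `b mod n`.
Conversely, `a < b` is equivalent to `ℓ_b + r < ℓ_a`, and the remaining edge conditions
`r ≤ ℓ_a`, `ℓ_b + r ≤ N` are then automatic.
-/

theorem ZMod.bijOn_intCast_Icc (n : ℕ) [NeZero n] :
    Set.BijOn (Int.cast : ℤ → ZMod n) (Set.Icc 1 n) Set.univ := by
  refine ⟨Set.mapsTo_univ _ _, ?injOn, ?surjOn⟩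
  case injOn =>
    intro a ha a' ha' h
    have hdvd : (n : ℤ) ∣ a' - a := (ZMod.intCast_eq_intCast_iff_dvd_sub a a' n).mp h
    have := Int.eq_zero_of_abs_lt_dvd hdvd (abs_sub_lt_iff.mpr ⟨by grind, by grind⟩)
    omega
  case surjOn =>
    intro i _
    refine ⟨(i - 1).val + 1, ⟨by omega, by have := (i - 1).val_lt; omega⟩, ?_⟩
    push_cast
    simp

section Inversions

variable {n : ℕ}

def momentGraphEdges (n N : ℕ) (ℓ : ZMod n → ℕ) : Set (ZMod n × ZMod n × ℕ) :=
  {t | 1 ≤ t.2.2 ∧ t.2.2 ≤ ℓ t.1 ∧ ℓ t.2.1 + t.2.2 ≤ N ∧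
    t.1 + (ℓ t.1 : ZMod n) = t.2.1 + (ℓ t.2.1 : ZMod n) + (t.2.2 : ZMod n) ∧
    ℓ t.2.1 + t.2.2 < ℓ t.1}

def inversions (n : ℕ) (f : ℤ → ℤ) : Set (ℤ × ℤ) :=
  {p | 1 ≤ p.1 ∧ p.1 ≤ n ∧ p.1 < p.2 ∧ f p.2 < f p.1}

def inversionToEdge (n : ℕ) (f : ℤ → ℤ) (p : ℤ × ℤ) : ZMod n × ZMod n × ℕ :=
  ((p.1 : ZMod n), (p.2 : ZMod n), (f p.1 - f p.2).toNat)

variable {N : ℕ} {ℓ : ZMod n → ℕ} {f : ℤ → ℤ}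

theorem mapsTo_inversionToEdge (hℓ : ∀ j, ℓ j ≤ N) (hf : ∀ a : ℤ, f a = a + ℓ a) :
    Set.MapsTo (inversionToEdge n f) (inversions n f) (momentGraphEdges n N ℓ) := by
  rintro ⟨a, b⟩ ⟨-, -, hab, hfab⟩
  dsimp only at hab hfab
  simp only [inversionToEdge, momentGraphEdges, Set.mem_ofPred_eq]
  rw [hf, hf] at hfab ⊢
  have hr : ((a + ℓ a - (b + ℓ b)).toNat : ℤ) = a + ℓ a - (b + ℓ b) :=
    Int.toNat_of_nonneg (by omega)
  have hN : (ℓ a : ℤ) ≤ N := by exact_mod_cast hℓ a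
  refine ⟨by omega, by omega, by omega, ?_, by omega⟩
  have hcast := congrArg (Int.cast : ℤ → ZMod n) hr
  push_cast at hcast
  rw [hcast]
  ring

theorem injOn_inversionToEdge [NeZero n] (hf : ∀ a : ℤ, f a = a + ℓ a) :
    Set.InjOn (inversionToEdge n f) (inversions n f) := by
  rintro ⟨a, b⟩ ⟨ha1, han, -, hfab⟩ ⟨a', b'⟩ ⟨ha1', han', -, hfab'⟩ h
  dsimp only at hfab hfab'
  simp only [inversionToEdge, Prod.mk.injEq] at h
  obtain ⟨hres_a, hres_b, hr⟩ := h
  have haa' : a = a' := (ZMod.bijOn_intCast_Icc n).injOn ⟨ha1, han⟩ ⟨ha1', han'⟩ hres_a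
  subst haa'
  have hfb : f b = f b' := by omega
  rw [hf, hf, hres_b] at hfb
  simp only [Prod.mk.injEq, true_and]
  omega

theorem surjOn_inversionToEdge [NeZero n] (hf : ∀ a : ℤ, f a = a + ℓ a) :
    Set.SurjOn (inversionToEdge n f) (inversions n f) (momentGraphEdges n N ℓ) := by
  rintro ⟨i, j, r⟩ ⟨hr1, -, -, hcong, hlt⟩
  dsimp only at hr1 hcong hlt
  obtain ⟨a, ⟨ha1, han⟩, rfl⟩ := (ZMod.bijOn_intCast_Icc n).surjOn (Set.mem_univ i)
  set b : ℤ := a + ℓ a - ℓ j - r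
  have hb : (b : ZMod n) = j := by
    simp only [b]
    push_cast
    rw [hcong]
    ring
  have hfab : f a - f b = r := by
    rw [hf, hf, hb]
    omega
  refine ⟨(a, b), ⟨ha1, han, show a < b by omega, show f b < f a by omega⟩, ?_⟩
  simp only [inversionToEdge, hb, hfab, Int.toNat_natCast]

theorem ncard_momentGraphEdges_eq_ncard_inversions [NeZero n] (hℓ : ∀ j, ℓ j ≤ N)
    (hf : ∀ a : ℤ, f a = a + ℓ a) :
    (momentGraphEdges n N ℓ).ncard = (inversions n f).ncard :=
  (Set.BijOn.ncard_eq ⟨mapsTo_inversionToEdge hℓ hf, injOn_inversionToEdge hf,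
    surjOn_inversionToEdge hf⟩).symm

end Inversions

theorem momentGraph_edge_count_eq_length_general
    (n ω k : ℕ) [NeZero n]
    (ℓ : ZMod n → ℕ) (hℓ : ℓ ∈ Ctuples n ω k)
    (f : ℤ → ℤ) (hf : ∀ a : ℤ, f a = a + (ℓ (a : ZMod n) : ℤ)) :
    {t : ZMod n × ZMod n × ℕ |
        1 ≤ t.2.2 ∧ t.2.2 ≤ ℓ t.1 ∧ ℓ t.2.1 + t.2.2 ≤ ω * n ∧
        t.1 + (ℓ t.1 : ZMod n) = t.2.1 + (ℓ t.2.1 : ZMod n) + (t.2.2 : ZMod n) ∧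
        ℓ t.2.1 + t.2.2 < ℓ t.1}.ncard =
      {p : ℤ × ℤ | 1 ≤ p.1 ∧ p.1 ≤ n ∧ p.1 < p.2 ∧ f p.2 < f p.1}.ncard :=
  ncard_momentGraphEdges_eq_ncard_inversions hℓ.1 hf

/-- For `ℓ ∈ C(k,n,ω)` with corresponding bounded affine permutation
`f a = a + ℓ (a mod n)`, the number of triples `(i,j,r)` defining moment-graph edges
starting at `ℓ` equals the number of inversions
`l(f) = #{(a,b) ∈ {1,…,n} × ℤ : a < b, f a > f b}`. -/
theorem momentGraph_edge_count_eq_length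
    (n ω k : ℕ) [NeZero n] (hω : 1 ≤ ω) (hk : 1 ≤ k) (hkn : k ≤ n)
    (ℓ : ZMod n → ℕ) (hℓ : ℓ ∈ Ctuples n ω k)
    (f : ℤ → ℤ) (hf : ∀ a : ℤ, f a = a + (ℓ (a : ZMod n) : ℤ)) :
    {t : ZMod n × ZMod n × ℕ |
        1 ≤ t.2.2 ∧ t.2.2 ≤ ℓ t.1 ∧ ℓ t.2.1 + t.2.2 ≤ ω * n ∧
        t.1 + (ℓ t.1 : ZMod n) = t.2.1 + (ℓ t.2.1 : ZMod n) + (t.2.2 : ZMod n) ∧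
        ℓ t.2.1 + t.2.2 < ℓ t.1}.ncard =
      {p : ℤ × ℤ | 1 ≤ p.1 ∧ p.1 ≤ n ∧ p.1 < p.2 ∧ f p.2 < f p.1}.ncard :=
  momentGraph_edge_count_eq_length_general n ω k ℓ hℓ f hf
end

section
/- Fix integers n ≥ 1, ω ≥ 1 and 1 ≤ k ≤ n. For every (k,n,ω) bounded affine permutation f, the inversion set {(a,b) ∈ {1,…,n} × ℤ : a < b and f(a) > f(b)} is finite of cardinality at most ωk(n−k); moreover, the number of f ∈ B(k,n,ω) whose inversion set has cardinality exactly ωk(n−k) equals the binomial coefficient C(n,k). -/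
/-- The set `B(k,n,ω)` of `(k,n,ω)` bounded affine permutations: bijections `f : ℤ → ℤ`
with `f (a+n) = f a + n`, `Σ_{a=1}^n (f a − a) = kωn` and `a ≤ f a ≤ a + ωn`. -/
def BoundedAffinePermutations (n ω k : ℕ) : Set (ℤ → ℤ) :=
  {f | Function.Bijective f ∧ (∀ a : ℤ, f (a + n) = f a + n) ∧
       (∑ a ∈ Finset.Icc (1 : ℤ) n, (f a - a)) = k * ω * n ∧
       ∀ a : ℤ, a ≤ f a ∧ f a ≤ a + ω * n}

/-- The inversion set of an affine permutation:
`{(a,b) ∈ {1,…,n} × ℤ : a < b, f a > f b}`. -/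
def inversionSet (n : ℕ) (f : ℤ → ℤ) : Set (ℤ × ℤ) :=
  {p | 1 ≤ p.1 ∧ p.1 ≤ n ∧ p.1 < p.2 ∧ f p.2 < f p.1}

namespace BAP

open Finset

structure Hyp (n ω k : ℕ) (f : ℤ → ℤ) : Prop where
  bij : Function.Bijective f
  per : ∀ a : ℤ, f (a + n) = f a + n
  hsum : (∑ a ∈ Finset.Icc (1 : ℤ) n, (f a - a)) = k * ω * n
  low : ∀ a : ℤ, a ≤ f a
  high : ∀ a : ℤ, f a ≤ a + ω * n

variable {n ω k : ℕ} {f : ℤ → ℤ}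

/-- the big period `M = ω n` as an integer -/
def Mz (n ω : ℕ) : ℤ := (ω : ℤ) * (n : ℤ)

lemma Hyp.per_int (h : Hyp n ω k f) : ∀ (s : ℤ) (a : ℤ), f (a + s * n) = f a + s * n := by
  have key : ∀ s : ℕ, ∀ a : ℤ, f (a + s * n) = f a + s * n := by
    intro s
    induction s with
    | zero => simp
    | succ m ih =>
      intro a
      have h1 : a + (m+1 : ℕ) * n = (a + m * n) + n := by push_cast; ring
      rw [h1, h.per, ih]
      push_cast; ring
  intro s a
  rcases le_or_gt 0 s with hs | hs
  · lift s to ℕ using hs; exact_mod_cast key s a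
  · have hs' : 0 ≤ -s := by omega
    lift -s to ℕ using hs' with m hm
    have h2 := key m (a + s * n)
    rw [hm] at h2
    have h3 : a + s*n + -s*n = a := by ring
    rw [h3] at h2
    linarith

lemma Hyp.perM (h : Hyp n ω k f) (a : ℤ) : f (a + Mz n ω) = f a + Mz n ω := by
  have := h.per_int (ω : ℤ) a
  simpa [Mz, mul_assoc] using this

lemma Hyp.highM (h : Hyp n ω k f) (a : ℤ) : f a ≤ a + Mz n ω := h.high a

lemma Hyp.inj (h : Hyp n ω k f) {a b : ℤ} (hab : f a = f b) : a = b := h.bij.injective hab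

/-- block sums: the sum of `f a - a` over any block of `n` consecutive integers is `kωn` -/
lemma Hyp.sum_block (h : Hyp n ω k f) (s : ℤ) :
    (∑ a ∈ Finset.Ioc (s*n) (s*n + n), (f a - a)) = k * ω * n := by
  have hIcc : Finset.Icc (1:ℤ) (n:ℤ) = Finset.Ioc (0:ℤ) (n:ℤ) := by
    ext x; simp [Int.lt_iff_add_one_le]
  have hmap : Finset.Ioc (s*n) (s*n+n) = (Finset.Ioc (0:ℤ) (n:ℤ)).map
      (addLeftEmbedding (s*n)) := by
    rw [Finset.map_add_left_Ioc]; ring_nf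
  rw [hmap, Finset.sum_map]
  have : ∀ a ∈ Finset.Ioc (0:ℤ) n, f (addLeftEmbedding (s*n) a) - (addLeftEmbedding (s*n) a)
      = f a - a := by
    intro a _
    have : (addLeftEmbedding (s*n) a : ℤ) = a + s * n := by
      simp [addLeftEmbedding]; ring
    rw [this, h.per_int s a]; ring
  rw [Finset.sum_congr rfl this, ← hIcc, h.hsum]

lemma Hyp.sum_window (h : Hyp n ω k f) (m : ℕ) :
    (∑ a ∈ Finset.Ioc (0:ℤ) (m*n), (f a - a)) = m * (k * ω * n) := by
  induction m with
  | zero => simp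
  | succ j ih =>
    have hsplit : (∑ a ∈ Finset.Ioc (0:ℤ) (j*n), (f a - a))
        + (∑ a ∈ Finset.Ioc ((j:ℤ)*n) ((j:ℤ)*n + n), (f a - a))
        = (∑ a ∈ Finset.Ioc (0:ℤ) ((j:ℤ)*n + n), (f a - a)) := by
      have hdisj : Disjoint (Finset.Ioc (0:ℤ) ((j:ℤ)*n)) (Finset.Ioc ((j:ℤ)*n) ((j:ℤ)*n + n)) := by
        rw [Finset.disjoint_left]; intro x hx hx'
        simp only [Finset.mem_Ioc] at hx hx'; omega
      rw [← Finset.sum_union hdisj,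
        Finset.Ioc_union_Ioc_eq_Ioc (by positivity) (by linarith [Int.natCast_nonneg n])]
    have hc : ((j+1 : ℕ) : ℤ) * n = (j:ℤ)*n + n := by push_cast; ring
    rw [hc, ← hsplit, ih, h.sum_block j]
    push_cast; ring

/-- the window `(0, M]` -/
noncomputable def W (n ω : ℕ) : Finset ℤ := Finset.Ioc 0 (Mz n ω)

/-- the residue representative of `f i` in the window -/
def piF (n ω : ℕ) (f : ℤ → ℤ) : ℤ → ℤ :=
  fun i => if Mz n ω < f i then f i - Mz n ω else f i

lemma Mz_pos (hn : 1 ≤ n) (hω : 1 ≤ ω) : 0 < Mz n ω := by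
  have : (1:ℤ) ≤ ω := by exact_mod_cast hω
  have : (1:ℤ) ≤ n := by exact_mod_cast hn
  have h1 : (1:ℤ) ≤ (ω:ℤ) := by exact_mod_cast hω
  have h2 : (1:ℤ) ≤ (n:ℤ) := by exact_mod_cast hn
  have := mul_le_mul h1 h2 (by norm_num) (by norm_num)
  simpa [Mz] using lt_of_lt_of_le one_pos (by nlinarith : (1:ℤ) ≤ (ω:ℤ) * n)

lemma mem_W {i : ℤ} : i ∈ W n ω ↔ 1 ≤ i ∧ i ≤ Mz n ω := by
  simp [W, Int.lt_iff_add_one_le]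

lemma Hyp.pi_mem (h : Hyp n ω k f) {i : ℤ} (hi : i ∈ W n ω) : piF n ω f i ∈ W n ω := by
  rw [mem_W] at hi ⊢
  have hl := h.low i
  have hh := h.highM i
  unfold piF
  split_ifs with hq
  · constructor
    · omega
    · omega
  · constructor
    · omega
    · omega

lemma Hyp.pi_inj (h : Hyp n ω k f) {i j : ℤ} (hi : i ∈ W n ω) (hj : j ∈ W n ω)
    (hij : piF n ω f i = piF n ω f j) : i = j := by
  rw [mem_W] at hi hj
  unfold piF at hij
  split_ifs at hij with h1 h2 h2
  · exact h.inj (by omega)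
  · -- f i - M = f j, so f i = f (j + M), i = j + M, contradiction
    have : f i = f (j + Mz n ω) := by rw [h.perM]; omega
    have := h.inj this
    omega
  · have : f j = f (i + Mz n ω) := by rw [h.perM]; omega
    have := h.inj this
    omega
  · exact h.inj (by omega)

lemma Hyp.pi_surj (h : Hyp n ω k f) {v : ℤ} (hv : v ∈ W n ω) :
    ∃ i ∈ W n ω, piF n ω f i = v := by
  rw [mem_W] at hv
  obtain ⟨x, hx⟩ := h.bij.surjective v
  have hl := h.low x
  have hh := h.highM x
  rcases le_or_gt 1 x with hx1 | hx1
  · refine ⟨x, mem_W.mpr ⟨hx1, by omega⟩, ?_⟩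
    unfold piF
    rw [hx]
    split_ifs with hq
    · omega
    · rfl
  · refine ⟨x + Mz n ω, mem_W.mpr ⟨by omega, by omega⟩, ?_⟩
    unfold piF
    rw [h.perM, hx]
    split_ifs with hq
    · ring
    · omega

lemma Hyp.pi_image (h : Hyp n ω k f) : (W n ω).image (piF n ω f) = W n ω := by
  apply Finset.eq_of_subset_of_card_le
  · intro v hv
    obtain ⟨i, hi, hiv⟩ := Finset.mem_image.mp hv
    exact hiv ▸ h.pi_mem hi
  · rw [Finset.card_image_of_injOn (fun i hi j hj hij => h.pi_inj hi hj hij)]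

lemma Hyp.sum_pi (h : Hyp n ω k f) :
    (∑ i ∈ W n ω, piF n ω f i) = ∑ i ∈ W n ω, i := by
  conv_rhs => rw [← h.pi_image]
  rw [Finset.sum_image (fun i hi j hj hij => h.pi_inj hi hj hij)]

/-- the set of "high" positions in the window -/
noncomputable def Aset (n ω : ℕ) (f : ℤ → ℤ) : Finset ℤ := (W n ω).filter (fun i => Mz n ω < f i)

lemma Hyp.card_Aset (h : Hyp n ω k f) (hn : 1 ≤ n) (hω : 1 ≤ ω) :
    (Aset n ω f).card = ω * k := by
  have hMpos : 0 < Mz n ω := Mz_pos hn hω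
  have hWwin : (∑ a ∈ Finset.Ioc (0:ℤ) ((ω:ℤ)*n), (f a - a)) = (ω:ℤ) * (k * ω * n) := by
    have := h.sum_window ω
    exact_mod_cast this
  have hsplit : ∀ i ∈ W n ω, f i - i
      = (piF n ω f i - i) + (if Mz n ω < f i then Mz n ω else 0) := by
    intro i _
    unfold piF
    split_ifs <;> ring
  have hW : W n ω = Finset.Ioc (0:ℤ) ((ω:ℤ)*n) := by rw [W, Mz]
  have h1 : (∑ i ∈ W n ω, (f i - i))
      = (∑ i ∈ W n ω, (piF n ω f i - i)) + ∑ i ∈ W n ω, (if Mz n ω < f i then Mz n ω else 0) := by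
    rw [← Finset.sum_add_distrib]
    exact Finset.sum_congr rfl hsplit
  have h2 : (∑ i ∈ W n ω, (piF n ω f i - i)) = 0 := by
    rw [Finset.sum_sub_distrib, h.sum_pi]; ring
  have h3 : (∑ i ∈ W n ω, (if Mz n ω < f i then Mz n ω else 0)) = (Aset n ω f).card * Mz n ω := by
    rw [Finset.sum_ite, Finset.sum_const_zero, add_zero, Finset.sum_const]
    simp [Aset, mul_comm]
  have h4 : ((Aset n ω f).card : ℤ) * Mz n ω = (ω:ℤ) * (k * ω * n) := by
    have h6 : (∑ i ∈ W n ω, (f i - i)) = (ω:ℤ) * (k * ω * n) := by rw [hW]; exact hWwin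
    rw [h6, h2, zero_add, h3] at h1
    linarith [h1]
  have h5 : (ω:ℤ) * (k * ω * n) = ((ω * k : ℕ) : ℤ) * Mz n ω := by
    push_cast [Mz]; ring
  rw [h5] at h4
  have := mul_right_cancel₀ (ne_of_gt hMpos) h4
  exact_mod_cast this

/-- inversions `(a,b)` with `a` in the window `(u,v]` -/
noncomputable def J (n ω : ℕ) (f : ℤ → ℤ) (u v : ℤ) : Finset (ℤ × ℤ) :=
  ((Finset.Ioc u v) ×ˢ (Finset.Ioc u (v + Mz n ω))).filter
    (fun p => p.1 < p.2 ∧ f p.2 < f p.1)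

lemma Hyp.mem_J (h : Hyp n ω k f) {u v : ℤ} (huv : u ≤ v) {p : ℤ × ℤ} :
    p ∈ J n ω f u v ↔ u < p.1 ∧ p.1 ≤ v ∧ p.1 < p.2 ∧ f p.2 < f p.1 := by
  unfold J
  rw [Finset.mem_filter, Finset.mem_product, Finset.mem_Ioc, Finset.mem_Ioc]
  constructor
  · rintro ⟨⟨⟨h1, h2⟩, _⟩, h5, h6⟩
    exact ⟨h1, h2, h5, h6⟩
  · rintro ⟨h1, h2, h5, h6⟩
    have hb1 : p.2 ≤ f p.2 := h.low p.2
    have hb2 : f p.1 ≤ p.1 + Mz n ω := h.highM p.1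
    exact ⟨⟨⟨h1, h2⟩, by omega, by omega⟩, h5, h6⟩

lemma Hyp.card_J_shift (h : Hyp n ω k f) (u v : ℤ) (huv : u ≤ v) (s : ℤ) :
    (J n ω f (u + s*n) (v + s*n)).card = (J n ω f u v).card := by
  apply Finset.card_bij (fun p _ => (p.1 - s*n, p.2 - s*n))
  · intro p hp
    rw [h.mem_J huv]
    dsimp only
    rw [h.mem_J (by omega)] at hp
    obtain ⟨h1, h2, h3, h4⟩ := hp
    refine ⟨by omega, by omega, by omega, ?_⟩
    have e1 : p.1 = (p.1 - s*n) + s*n := by ring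
    have e2 : p.2 = (p.2 - s*n) + s*n := by ring
    rw [e1, e2, h.per_int s, h.per_int s] at h4
    omega
  · intro p hp q hq hpq
    simp only [Prod.mk.injEq] at hpq
    have : p.1 = q.1 := by omega
    have : p.2 = q.2 := by omega
    exact Prod.ext (by omega) (by omega)
  · intro p hp
    refine ⟨(p.1 + s*n, p.2 + s*n), ?_, by simp⟩
    rw [h.mem_J huv] at hp
    rw [h.mem_J (by omega)]
    obtain ⟨h1, h2, h3, h4⟩ := hp
    refine ⟨by omega, by omega, by omega, ?_⟩
    rw [h.per_int s, h.per_int s]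
    omega

lemma Hyp.card_J_split (h : Hyp n ω k f) {u v w : ℤ} (huv : u ≤ v) (hvw : v ≤ w) :
    (J n ω f u w).card = (J n ω f u v).card + (J n ω f v w).card := by
  have hsub : J n ω f u w = (J n ω f u v) ∪ (J n ω f v w) := by
    ext p
    rw [h.mem_J (le_trans huv hvw), Finset.mem_union, h.mem_J huv, h.mem_J hvw]
    constructor
    · rintro ⟨h1, h2, h3, h4⟩
      rcases le_or_gt p.1 v with hc | hc
      · exact Or.inl ⟨h1, hc, h3, h4⟩
      · exact Or.inr ⟨hc, h2, h3, h4⟩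
    · rintro (⟨h1, h2, h3, h4⟩ | ⟨h1, h2, h3, h4⟩)
      · exact ⟨h1, by omega, h3, h4⟩
      · exact ⟨by omega, h2, h3, h4⟩
  rw [hsub, Finset.card_union_of_disjoint]
  rw [Finset.disjoint_left]
  intro p hp hp'
  rw [h.mem_J huv] at hp
  rw [h.mem_J hvw] at hp'
  omega

lemma Hyp.card_J_window (h : Hyp n ω k f) (m : ℕ) :
    (J n ω f 0 ((m:ℤ)*n)).card = m * (J n ω f 0 n).card := by
  induction m with
  | zero => simp [J]
  | succ j ih =>
    have hc : ((j+1 : ℕ) : ℤ) * n = (j:ℤ)*n + n := by push_cast; ring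
    rw [hc, h.card_J_split (u := 0) (v := (j:ℤ)*n) (w := (j:ℤ)*n + n) (by positivity) (by linarith [Int.natCast_nonneg n]), ih]
    have hs : (J n ω f ((j:ℤ)*n) ((j:ℤ)*n + n)).card = (J n ω f 0 n).card := by
      have h7 := h.card_J_shift 0 n (Int.natCast_nonneg n) j
      have e : (0 : ℤ) + (j:ℤ)*n = (j:ℤ)*n := by ring
      have e2 : (n : ℤ) + (j:ℤ)*n = (j:ℤ)*n + n := by ring
      rw [e, e2] at h7
      exact h7
    rw [hs]
    ring

/-- window pairs encoding inversions -/
noncomputable def PairF (n ω : ℕ) (f : ℤ → ℤ) : Finset (ℤ × ℤ) :=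
  ((W n ω) ×ˢ (W n ω)).filter
    (fun p => p.1 ≠ p.2 ∧
      (if p.1 < p.2 then f p.2 < f p.1 else f p.2 + Mz n ω < f p.1))

noncomputable def IAA (n ω : ℕ) (f : ℤ → ℤ) : Finset (ℤ × ℤ) :=
  ((W n ω) ×ˢ (W n ω)).filter
    (fun p => p.1 < p.2 ∧ Mz n ω < f p.1 ∧ Mz n ω < f p.2 ∧ piF n ω f p.2 < piF n ω f p.1)

noncomputable def IBB (n ω : ℕ) (f : ℤ → ℤ) : Finset (ℤ × ℤ) :=
  ((W n ω) ×ˢ (W n ω)).filter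
    (fun p => p.1 < p.2 ∧ ¬ (Mz n ω < f p.1) ∧ ¬ (Mz n ω < f p.2) ∧ piF n ω f p.2 < piF n ω f p.1)

noncomputable def IBA (n ω : ℕ) (f : ℤ → ℤ) : Finset (ℤ × ℤ) :=
  ((W n ω) ×ˢ (W n ω)).filter
    (fun p => p.1 < p.2 ∧ ¬ (Mz n ω < f p.1) ∧ Mz n ω < f p.2 ∧ piF n ω f p.2 < piF n ω f p.1)

/-- the complement of `Aset` in the window -/
noncomputable def Bset (n ω : ℕ) (f : ℤ → ℤ) : Finset ℤ := (W n ω).filter (fun i => ¬ (Mz n ω < f i))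

lemma Hyp.card_J_eq_pairF (h : Hyp n ω k f) (hn : 1 ≤ n) (hω : 1 ≤ ω) :
    (J n ω f 0 (Mz n ω)).card = (PairF n ω f).card := by
  have hM : (0:ℤ) ≤ Mz n ω := le_of_lt (Mz_pos hn hω)
  apply Finset.card_bij
    (fun p _ => (p.1, if p.2 ≤ Mz n ω then p.2 else p.2 - Mz n ω))
  · intro p hp
    rw [h.mem_J hM] at hp
    obtain ⟨h1, h2, h3, h4⟩ := hp
    have hb1 : p.2 ≤ f p.2 := h.low p.2
    have hb2 : f p.1 ≤ p.1 + Mz n ω := h.highM p.1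
    unfold PairF
    rw [Finset.mem_filter, Finset.mem_product]
    dsimp only
    by_cases hc : p.2 ≤ Mz n ω
    · rw [if_pos hc]
      refine ⟨⟨mem_W.mpr ⟨by omega, by omega⟩, mem_W.mpr ⟨by omega, by omega⟩⟩, by omega, ?_⟩
      rw [if_pos h3]; exact h4
    · rw [if_neg hc]
      have hfj : f (p.2 - Mz n ω) = f p.2 - Mz n ω := by
        have h9 := h.perM (p.2 - Mz n ω)
        have e : p.2 - Mz n ω + Mz n ω = p.2 := by ring
        rw [e] at h9; omega
      refine ⟨⟨mem_W.mpr ⟨by omega, by omega⟩, mem_W.mpr ⟨by omega, by omega⟩⟩, by omega, ?_⟩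
      rw [if_neg (by omega)]
      omega
  · intro p hp q hq hpq
    simp only [Prod.mk.injEq] at hpq
    obtain ⟨e1, e2⟩ := hpq
    rw [h.mem_J hM] at hp hq
    have l1 : p.2 ≤ f p.2 := h.low p.2
    have l2 : q.2 ≤ f q.2 := h.low q.2
    have l3 : f p.1 ≤ p.1 + Mz n ω := h.highM p.1
    have l4 : f q.1 ≤ q.1 + Mz n ω := h.highM q.1
    apply Prod.ext e1
    rw [← e1] at hq
    rw [← e1] at l4
    split_ifs at e2 <;> omega
  · intro p hp
    unfold PairF at hp
    rw [Finset.mem_filter, Finset.mem_product, mem_W, mem_W] at hp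
    obtain ⟨⟨hp1, hp2⟩, hne, hcond⟩ := hp
    by_cases hlt : p.1 < p.2
    · refine ⟨(p.1, p.2), ?_, ?_⟩
      · rw [h.mem_J hM]
        rw [if_pos hlt] at hcond
        exact ⟨by omega, by omega, hlt, hcond⟩
      · dsimp only; rw [if_pos (by omega)]
    · refine ⟨(p.1, p.2 + Mz n ω), ?_, ?_⟩
      · rw [h.mem_J hM]
        rw [if_neg hlt] at hcond
        dsimp only
        rw [h.perM]
        exact ⟨by omega, by omega, by omega, by omega⟩
      · dsimp only
        rw [if_neg (by omega)]
        rw [Prod.mk.injEq]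
        exact ⟨rfl, by ring⟩

lemma piF_of_high {i : ℤ} (hi : Mz n ω < f i) : piF n ω f i = f i - Mz n ω := if_pos hi

lemma piF_of_low {i : ℤ} (hi : ¬ Mz n ω < f i) : piF n ω f i = f i := if_neg hi

lemma Hyp.pi_bounds (h : Hyp n ω k f) {i : ℤ} (hi : i ∈ W n ω) :
    1 ≤ piF n ω f i ∧ piF n ω f i ≤ Mz n ω := mem_W.mp (h.pi_mem hi)

lemma Hyp.pairF_TT (h : Hyp n ω k f) :
    (PairF n ω f).filter (fun p => Mz n ω < f p.1 ∧ Mz n ω < f p.2) = IAA n ω f := by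
  ext p
  unfold PairF IAA
  rw [Finset.mem_filter, Finset.mem_filter, Finset.mem_filter]
  constructor
  · rintro ⟨⟨hW, hne, hcond⟩, hq1, hq2⟩
    have hWW := Finset.mem_product.mp hW
    have b1 := mem_W.mp hWW.1
    have b2 := mem_W.mp hWW.2
    refine ⟨hW, ?_, hq1, hq2, ?_⟩
    · by_cases hlt : p.1 < p.2
      · exact hlt
      · exfalso
        rw [if_neg hlt] at hcond
        have := h.highM p.1
        omega
    · by_cases hlt : p.1 < p.2
      · rw [if_pos hlt] at hcond
        rw [piF_of_high hq1, piF_of_high hq2]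
        omega
      · exfalso
        rw [if_neg hlt] at hcond
        have := h.highM p.1
        omega
  · rintro ⟨hW, hlt, hq1, hq2, hpi⟩
    rw [piF_of_high hq1, piF_of_high hq2] at hpi
    exact ⟨⟨hW, by omega, by rw [if_pos hlt]; omega⟩, hq1, hq2⟩

lemma Hyp.pairF_FF (h : Hyp n ω k f) :
    (PairF n ω f).filter (fun p => ¬ Mz n ω < f p.1 ∧ ¬ Mz n ω < f p.2) = IBB n ω f := by
  ext p
  unfold PairF IBB
  rw [Finset.mem_filter, Finset.mem_filter, Finset.mem_filter]
  constructor
  · rintro ⟨⟨hW, hne, hcond⟩, hq1, hq2⟩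
    have hWW := Finset.mem_product.mp hW
    have b1 := mem_W.mp hWW.1
    have b2 := mem_W.mp hWW.2
    refine ⟨hW, ?_, hq1, hq2, ?_⟩
    · by_cases hlt : p.1 < p.2
      · exact hlt
      · exfalso
        rw [if_neg hlt] at hcond
        have := h.low p.2
        omega
    · by_cases hlt : p.1 < p.2
      · rw [if_pos hlt] at hcond
        rw [piF_of_low hq1, piF_of_low hq2]
        omega
      · exfalso
        rw [if_neg hlt] at hcond
        have := h.low p.2
        omega
  · rintro ⟨hW, hlt, hq1, hq2, hpi⟩
    rw [piF_of_low hq1, piF_of_low hq2] at hpi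
    exact ⟨⟨hW, by omega, by rw [if_pos hlt]; omega⟩, hq1, hq2⟩

lemma Hyp.pairF_FT (h : Hyp n ω k f) :
    (PairF n ω f).filter (fun p => ¬ Mz n ω < f p.1 ∧ Mz n ω < f p.2) = ∅ := by
  ext p
  simp only [Finset.mem_filter, Finset.notMem_empty, iff_false]
  rintro ⟨hPF, hq1, hq2⟩
  unfold PairF at hPF
  rw [Finset.mem_filter, Finset.mem_product] at hPF
  obtain ⟨⟨hW1, hW2⟩, hne, hcond⟩ := hPF
  have b1 := mem_W.mp hW1
  have b2 := mem_W.mp hW2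
  have l1 := h.highM p.1
  have l2 := h.low p.2
  by_cases hlt : p.1 < p.2
  · rw [if_pos hlt] at hcond; omega
  · rw [if_neg hlt] at hcond; omega

lemma Hyp.pairF_TF (h : Hyp n ω k f) :
    ((PairF n ω f).filter (fun p => Mz n ω < f p.1 ∧ ¬ Mz n ω < f p.2)).card
      + (IBA n ω f).card = (Aset n ω f).card * (Bset n ω f).card := by
  classical
  set Cond : ℤ × ℤ → Prop := fun p => p.1 ≠ p.2 ∧
      (if p.1 < p.2 then f p.2 < f p.1 else f p.2 + Mz n ω < f p.1) with hCond
  have key1 : (PairF n ω f).filter (fun p => Mz n ω < f p.1 ∧ ¬ Mz n ω < f p.2)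
      = ((Aset n ω f) ×ˢ (Bset n ω f)).filter Cond := by
    ext p
    unfold PairF Aset Bset
    rw [Finset.mem_filter, Finset.mem_filter, Finset.mem_filter, Finset.mem_product,
      Finset.mem_product, Finset.mem_filter, Finset.mem_filter]
    constructor
    · rintro ⟨⟨hW, hc⟩, hq1, hq2⟩
      exact ⟨⟨⟨hW.1, hq1⟩, ⟨hW.2, hq2⟩⟩, hc⟩
    · rintro ⟨⟨⟨hW1, hq1⟩, hW2, hq2⟩, hc⟩
      exact ⟨⟨⟨hW1, hW2⟩, hc⟩, hq1, hq2⟩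
  have key2 : (((Aset n ω f) ×ˢ (Bset n ω f)).filter (fun p => ¬ Cond p)).card
      = (IBA n ω f).card := by
    apply Finset.card_bij (fun p _ => (p.2, p.1))
    · intro p hp
      rw [Finset.mem_filter, Finset.mem_product] at hp
      obtain ⟨⟨hpA, hpB⟩, hnc⟩ := hp
      simp only [Aset, Bset, Finset.mem_filter] at hpA hpB
      obtain ⟨hW1, hq1⟩ := hpA
      obtain ⟨hW2, hq2⟩ := hpB
      have hne : p.1 ≠ p.2 := by
        intro e; rw [e] at hq1; exact hq2 hq1
      rw [hCond] at hnc
      have hcond2 : ¬ (if p.1 < p.2 then f p.2 < f p.1 else f p.2 + Mz n ω < f p.1) :=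
        fun hcnd => hnc ⟨hne, hcnd⟩
      have b1 := mem_W.mp hW1
      have b2 := mem_W.mp hW2
      have hlt : p.2 < p.1 := by
        by_contra hge
        have hlt' : p.1 < p.2 := by omega
        rw [if_pos hlt'] at hcond2
        omega
      rw [if_neg (by omega)] at hcond2
      unfold IBA
      rw [Finset.mem_filter, Finset.mem_product]
      dsimp only
      refine ⟨⟨hW2, hW1⟩, hlt, hq2, hq1, ?_⟩
      rw [piF_of_high hq1, piF_of_low hq2]
      have hnepi : piF n ω f p.1 ≠ piF n ω f p.2 := by
        intro e; exact hne (h.pi_inj hW1 hW2 e)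
      rw [piF_of_high hq1, piF_of_low hq2] at hnepi
      omega
    · intro p hp q hq hpq
      simp only [Prod.mk.injEq] at hpq
      exact Prod.ext hpq.2 hpq.1
    · intro p hp
      refine ⟨(p.2, p.1), ?_, by simp⟩
      unfold IBA at hp
      rw [Finset.mem_filter, Finset.mem_product] at hp
      obtain ⟨⟨hW1, hW2⟩, hlt, hq1, hq2, hpi⟩ := hp
      rw [Finset.mem_filter, Finset.mem_product]
      refine ⟨⟨?_, ?_⟩, ?_⟩
      · unfold Aset; rw [Finset.mem_filter]; exact ⟨hW2, hq2⟩
      · unfold Bset; rw [Finset.mem_filter]; exact ⟨hW1, hq1⟩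
      · rw [hCond]
        dsimp only
        rw [piF_of_high hq2, piF_of_low hq1] at hpi
        rintro ⟨hne, hcond⟩
        rw [if_neg (by omega)] at hcond
        omega
  have key3 := Finset.card_filter_add_card_filter_not
    (s := (Aset n ω f) ×ˢ (Bset n ω f)) (p := Cond)
  rw [key1, ← Finset.card_product]
  omega

lemma Hyp.pairF_decomp (h : Hyp n ω k f) :
    (PairF n ω f).card + (IBA n ω f).card
      = (Aset n ω f).card * (Bset n ω f).card + (IAA n ω f).card + (IBB n ω f).card := by
  classical
  have h1 := Finset.card_filter_add_card_filter_not
    (s := PairF n ω f) (p := fun p => Mz n ω < f p.1)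
  have h2 := Finset.card_filter_add_card_filter_not
    (s := (PairF n ω f).filter (fun p => Mz n ω < f p.1)) (p := fun p => Mz n ω < f p.2)
  have h3 := Finset.card_filter_add_card_filter_not
    (s := (PairF n ω f).filter (fun p => ¬ Mz n ω < f p.1)) (p := fun p => Mz n ω < f p.2)
  rw [Finset.filter_filter, Finset.filter_filter] at h2
  rw [Finset.filter_filter, Finset.filter_filter] at h3
  have e1 : (PairF n ω f).filter (fun p => Mz n ω < f p.1 ∧ Mz n ω < f p.2) = IAA n ω f :=
    h.pairF_TT
  have e2 : (PairF n ω f).filter (fun p => ¬ Mz n ω < f p.1 ∧ ¬ Mz n ω < f p.2) = IBB n ω f :=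
    h.pairF_FF
  have e3 : (PairF n ω f).filter (fun p => ¬ Mz n ω < f p.1 ∧ Mz n ω < f p.2) = ∅ :=
    h.pairF_FT
  have e4 := h.pairF_TF
  rw [e1] at h2
  rw [e3, e2] at h3
  simp only [Finset.card_empty] at h3
  omega

/-- left arcs over the cut `t` -/
noncomputable def Lt (n ω : ℕ) (f : ℤ → ℤ) (t : ℤ) : Finset ℤ :=
  (W n ω).filter (fun j => piF n ω f j ≤ t ∧ t < j)

/-- right arcs over the cut `t` -/
noncomputable def Rt (n ω : ℕ) (f : ℤ → ℤ) (t : ℤ) : Finset ℤ :=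
  (W n ω).filter (fun i => i ≤ t ∧ t < piF n ω f i)

lemma Hyp.balance (h : Hyp n ω k f) (t : ℤ) :
    (Lt n ω f t).card = (Rt n ω f t).card := by
  classical
  have hX : ((W n ω).filter (fun j => piF n ω f j ≤ t)).card
      = ((W n ω).filter (fun j => j ≤ t)).card := by
    apply Finset.card_bij (fun j _ => piF n ω f j)
    · intro j hj
      rw [Finset.mem_filter] at hj ⊢
      exact ⟨h.pi_mem hj.1, hj.2⟩
    · intro p hp q hq hpq
      rw [Finset.mem_filter] at hp hq
      exact h.pi_inj hp.1 hq.1 hpq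
    · intro v hv
      rw [Finset.mem_filter] at hv
      obtain ⟨i, hi, hieq⟩ := h.pi_surj hv.1
      exact ⟨i, Finset.mem_filter.mpr ⟨hi, by rw [hieq]; exact hv.2⟩, hieq⟩
  have s1 := Finset.card_filter_add_card_filter_not
    (s := (W n ω).filter (fun j => piF n ω f j ≤ t)) (p := fun j => j ≤ t)
  have s2 := Finset.card_filter_add_card_filter_not
    (s := (W n ω).filter (fun j => j ≤ t)) (p := fun j => piF n ω f j ≤ t)
  rw [Finset.filter_filter, Finset.filter_filter] at s1
  rw [Finset.filter_filter, Finset.filter_filter] at s2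
  have e0 : (W n ω).filter (fun a => piF n ω f a ≤ t ∧ a ≤ t)
      = (W n ω).filter (fun a => a ≤ t ∧ piF n ω f a ≤ t) := by
    apply Finset.filter_congr; intro x _; constructor
    · rintro ⟨u1, u2⟩; exact ⟨u2, u1⟩
    · rintro ⟨u1, u2⟩; exact ⟨u2, u1⟩
  have e1 : (W n ω).filter (fun a => piF n ω f a ≤ t ∧ ¬ a ≤ t) = Lt n ω f t := by
    apply Finset.filter_congr; intro x _; constructor
    · rintro ⟨u1, u2⟩; exact ⟨u1, by omega⟩
    · rintro ⟨u1, u2⟩; exact ⟨u1, by omega⟩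
  have e2 : (W n ω).filter (fun a => a ≤ t ∧ ¬ piF n ω f a ≤ t) = Rt n ω f t := by
    apply Finset.filter_congr; intro x _; constructor
    · rintro ⟨u1, u2⟩; exact ⟨u1, by omega⟩
    · rintro ⟨u1, u2⟩; exact ⟨u1, by omega⟩
  rw [e1] at s1
  rw [e2] at s2
  rw [e0] at s1
  omega

lemma Hyp.q_pi_le (h : Hyp n ω k f) {i : ℤ} (hq : Mz n ω < f i) : piF n ω f i ≤ i := by
  rw [piF_of_high hq]; have := h.highM i; omega

lemma Hyp.nq_pi_ge (h : Hyp n ω k f) {i : ℤ} (hq : ¬ Mz n ω < f i) : i ≤ piF n ω f i := by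
  rw [piF_of_low hq]; exact h.low i

lemma Hyp.pi_lt_imp_q (h : Hyp n ω k f) {i : ℤ} (hlt : piF n ω f i < i) : Mz n ω < f i := by
  by_contra hq; have := h.nq_pi_ge hq; omega

lemma Hyp.pi_gt_imp_nq (h : Hyp n ω k f) {i : ℤ} (hlt : i < piF n ω f i) : ¬ Mz n ω < f i := by
  intro hq; have := h.q_pi_le hq; omega

/-- the property that `t` is the minimal non-fixed point of `piF` -/
def MinNF (n ω : ℕ) (f : ℤ → ℤ) (t : ℤ) : Prop :=
  piF n ω f t ≠ t ∧ ∀ s ∈ W n ω, s < t → piF n ω f s = s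

noncomputable instance MinNF.dec (n ω : ℕ) (f : ℤ → ℤ) (t : ℤ) : Decidable (MinNF n ω f t) :=
  decidable_of_iff (piF n ω f t ≠ t ∧ ∀ s ∈ W n ω, s < t → piF n ω f s = s) Iff.rfl

lemma Hyp.minNF_pi_gt (h : Hyp n ω k f) {t : ℤ} (ht : t ∈ W n ω) (hm : MinNF n ω f t) :
    t < piF n ω f t := by
  rcases lt_trichotomy (piF n ω f t) t with hlt | heq | hgt
  · exfalso
    have hv : piF n ω f t ∈ W n ω := h.pi_mem ht
    have hfix := hm.2 _ hv hlt
    have he : t = piF n ω f t := h.pi_inj ht hv hfix.symm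
    exact hm.1 he.symm
  · exact absurd heq hm.1
  · exact hgt

lemma Hyp.percut (h : Hyp n ω k f) {t : ℤ} (ht : t ∈ W n ω) :
    ((IAA n ω f).filter (fun p => piF n ω f p.1 = t)).card
      + ((IBB n ω f).filter (fun p => p.2 = t)).card
      + (if MinNF n ω f t then 1 else 0)
      ≤ ((IBA n ω f).filter (fun p => max p.1 (piF n ω f p.2) = t)).card := by
  classical
  obtain ⟨iT, hiT, hiTeq⟩ := h.pi_surj ht
  have hbal := h.balance t
  -- uniform upper bound for the AA fiber
  have hAA : ((IAA n ω f).filter (fun p => piF n ω f p.1 = t)).card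
      ≤ ((Lt n ω f t).erase iT).card := by
    apply Finset.card_le_card_of_injOn (fun p => p.2)
    · intro p hp
      rw [Finset.mem_coe, Finset.mem_filter] at hp
      obtain ⟨hpI, hpt⟩ := hp
      unfold IAA at hpI
      rw [Finset.mem_filter, Finset.mem_product] at hpI
      obtain ⟨⟨hW1, hW2⟩, hlt, hq1, hq2, hpi⟩ := hpI
      have hp1 : p.1 = iT := h.pi_inj hW1 hiT (by rw [hpt, hiTeq])
      have hle := h.q_pi_le hq1
      simp only [Finset.mem_coe]; rw [Finset.mem_erase]
      constructor
      · intro e; rw [← e] at hiTeq; rw [hpt] at hpi; omega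
      · unfold Lt
        rw [Finset.mem_filter]
        exact ⟨hW2, by omega, by omega⟩
    · intro p hp p' hp' he
      rw [Finset.mem_coe, Finset.mem_filter] at hp hp'
      have e1 : p.1 = iT := by
        obtain ⟨hpI, hpt⟩ := hp
        unfold IAA at hpI
        rw [Finset.mem_filter, Finset.mem_product] at hpI
        exact h.pi_inj hpI.1.1 hiT (by rw [hpt, hiTeq])
      have e2 : p'.1 = iT := by
        obtain ⟨hpI, hpt⟩ := hp'
        unfold IAA at hpI
        rw [Finset.mem_filter, Finset.mem_product] at hpI
        exact h.pi_inj hpI.1.1 hiT (by rw [hpt, hiTeq])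
      exact Prod.ext (by rw [e1, e2]) he
  -- uniform upper bound for the BB fiber
  have hBB : ((IBB n ω f).filter (fun p => p.2 = t)).card
      ≤ ((Rt n ω f t).erase t).card := by
    apply Finset.card_le_card_of_injOn (fun p => p.1)
    · intro p hp
      rw [Finset.mem_coe, Finset.mem_filter] at hp
      obtain ⟨hpI, hpt⟩ := hp
      unfold IBB at hpI
      rw [Finset.mem_filter, Finset.mem_product] at hpI
      obtain ⟨⟨hW1, hW2⟩, hlt, hq1, hq2, hpi⟩ := hpI
      have hge2 := h.nq_pi_ge hq2
      simp only [Finset.mem_coe]; rw [Finset.mem_erase]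
      constructor
      · omega
      · unfold Rt
        rw [Finset.mem_filter]
        exact ⟨hW1, by omega, by omega⟩
    · intro p hp p' hp' he
      rw [Finset.mem_coe, Finset.mem_filter] at hp hp'
      exact Prod.ext he (by rw [hp.2, hp'.2])
  -- BB fiber is empty when t is high
  have hBBz : Mz n ω < f t → ((IBB n ω f).filter (fun p => p.2 = t)).card = 0 := by
    intro hqt
    rw [Finset.card_eq_zero]
    ext p
    simp only [Finset.mem_filter, Finset.notMem_empty, iff_false]
    rintro ⟨hpI, hpt⟩
    unfold IBB at hpI
    rw [Finset.mem_filter, Finset.mem_product] at hpI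
    rw [hpt] at hpI
    exact hpI.2.2.2.1 hqt
  -- AA fiber is empty when iT < t or (iT = t and t not high)
  have hAAz : (iT < t ∨ (iT = t ∧ ¬ Mz n ω < f t)) →
      ((IAA n ω f).filter (fun p => piF n ω f p.1 = t)).card = 0 := by
    intro hcase
    rw [Finset.card_eq_zero]
    ext p
    simp only [Finset.mem_filter, Finset.notMem_empty, iff_false]
    rintro ⟨hpI, hpt⟩
    unfold IAA at hpI
    rw [Finset.mem_filter, Finset.mem_product] at hpI
    obtain ⟨⟨hW1, hW2⟩, hlt, hq1, hq2, hpi⟩ := hpI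
    have hp1 : p.1 = iT := h.pi_inj hW1 hiT (by rw [hpt, hiTeq])
    have hle := h.q_pi_le hq1
    rcases hcase with hc | ⟨hc1, hc2⟩
    · omega
    · rw [hp1, hc1] at hq1; exact hc2 hq1
  -- lower-bound subsets for the BA fiber
  have hsubX1 : t < piF n ω f t →
      ({t} ×ˢ (Lt n ω f t)) ⊆ (IBA n ω f).filter (fun p => max p.1 (piF n ω f p.2) = t) := by
    intro hpt p hp
    rw [Finset.mem_product, Finset.mem_singleton] at hp
    obtain ⟨hp1, hp2⟩ := hp
    unfold Lt at hp2
    rw [Finset.mem_filter] at hp2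
    obtain ⟨hW2, hpj, hjt⟩ := hp2
    rw [Finset.mem_filter]
    constructor
    · unfold IBA
      rw [Finset.mem_filter, Finset.mem_product, hp1]
      have hqj : Mz n ω < f p.2 := h.pi_lt_imp_q (by omega)
      have hnqt : ¬ Mz n ω < f t := h.pi_gt_imp_nq hpt
      exact ⟨⟨ht, hW2⟩, by omega, hnqt, hqj, by omega⟩
    · rw [hp1]
      exact max_eq_left (by omega)
  have hsubX2 : t < iT →
      (((Rt n ω f t).erase t) ×ˢ {iT}) ⊆ (IBA n ω f).filter (fun p => max p.1 (piF n ω f p.2) = t) := by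
    intro hc p hp
    rw [Finset.mem_product, Finset.mem_singleton, Finset.mem_erase] at hp
    obtain ⟨⟨hpne, hp1⟩, hp2⟩ := hp
    unfold Rt at hp1
    rw [Finset.mem_filter] at hp1
    obtain ⟨hW1, hile, hpix⟩ := hp1
    rw [Finset.mem_filter]
    constructor
    · unfold IBA
      rw [Finset.mem_filter, Finset.mem_product, hp2]
      have hqi : Mz n ω < f iT := h.pi_lt_imp_q (by omega)
      have hnqx : ¬ Mz n ω < f p.1 := h.pi_gt_imp_nq (by omega)
      exact ⟨⟨hW1, hiT⟩, by omega, hnqx, hqi, by rw [hiTeq]; omega⟩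
    · rw [hp2, hiTeq]
      exact max_eq_right (by omega)
  have hsubX3 : piF n ω f t = t → Mz n ω < f t →
      ((Rt n ω f t) ×ˢ {t}) ⊆ (IBA n ω f).filter (fun p => max p.1 (piF n ω f p.2) = t) := by
    intro hfix hqt p hp
    rw [Finset.mem_product, Finset.mem_singleton] at hp
    obtain ⟨hp1, hp2⟩ := hp
    unfold Rt at hp1
    rw [Finset.mem_filter] at hp1
    obtain ⟨hW1, hile, hpix⟩ := hp1
    rw [Finset.mem_filter]
    constructor
    · unfold IBA
      rw [Finset.mem_filter, Finset.mem_product, hp2]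
      have hnqx : ¬ Mz n ω < f p.1 := h.pi_gt_imp_nq (by omega)
      have hne : p.1 ≠ t := by
        intro e; rw [e] at hpix; omega
      exact ⟨⟨hW1, ht⟩, by omega, hnqx, hqt, by rw [hfix]; omega⟩
    · rw [hp2, hfix]
      exact max_eq_right (by omega)
  have hsubX4 : piF n ω f t = t → ¬ Mz n ω < f t →
      ({t} ×ˢ (Lt n ω f t)) ⊆ (IBA n ω f).filter (fun p => max p.1 (piF n ω f p.2) = t) := by
    intro hfix hnqt p hp
    rw [Finset.mem_product, Finset.mem_singleton] at hp
    obtain ⟨hp1, hp2⟩ := hp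
    unfold Lt at hp2
    rw [Finset.mem_filter] at hp2
    obtain ⟨hW2, hpj, hjt⟩ := hp2
    rw [Finset.mem_filter]
    constructor
    · unfold IBA
      rw [Finset.mem_filter, Finset.mem_product, hp1]
      have hqj : Mz n ω < f p.2 := h.pi_lt_imp_q (by omega)
      have hpjne : piF n ω f p.2 ≠ t := by
        intro e
        have : p.2 = t := h.pi_inj hW2 ht (by rw [e, hfix])
        omega
      exact ⟨⟨ht, hW2⟩, by omega, hnqt, hqj, by omega⟩
    · rw [hp1]
      exact max_eq_left (by omega)
  -- case analysis
  rcases lt_trichotomy t iT with hc | hc | hc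
  · -- t < iT
    have hiTLt : iT ∈ Lt n ω f t := by
      unfold Lt; rw [Finset.mem_filter]; exact ⟨hiT, by omega, hc⟩
    have hcardL : ((Lt n ω f t).erase iT).card = (Lt n ω f t).card - 1 :=
      Finset.card_erase_of_mem hiTLt
    have hlpos : 1 ≤ (Lt n ω f t).card := Finset.card_pos.mpr ⟨iT, hiTLt⟩
    rcases lt_trichotomy t (piF n ω f t) with hpt | hpt | hpt
    · -- c1 : t < π t
      have htRt : t ∈ Rt n ω f t := by
        unfold Rt; rw [Finset.mem_filter]; exact ⟨ht, le_refl t, hpt⟩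
      have hcardR : ((Rt n ω f t).erase t).card = (Rt n ω f t).card - 1 :=
        Finset.card_erase_of_mem htRt
      have hdisj : Disjoint ({t} ×ˢ (Lt n ω f t)) (((Rt n ω f t).erase t) ×ˢ {iT}) := by
        rw [Finset.disjoint_left]
        intro p hp hp'
        rw [Finset.mem_product, Finset.mem_singleton] at hp
        rw [Finset.mem_product, Finset.mem_erase] at hp'
        exact hp'.1.1 (hp.1 ▸ rfl)
      have hsub : ({t} ×ˢ (Lt n ω f t)) ∪ (((Rt n ω f t).erase t) ×ˢ {iT})
          ⊆ (IBA n ω f).filter (fun p => max p.1 (piF n ω f p.2) = t) :=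
        Finset.union_subset (hsubX1 hpt) (hsubX2 hc)
      have hcard := Finset.card_le_card hsub
      rw [Finset.card_union_of_disjoint hdisj, Finset.card_product, Finset.card_product] at hcard
      simp only [Finset.card_singleton, one_mul, mul_one] at hcard
      rw [hcardR] at hcard
      have hw : (if MinNF n ω f t then 1 else 0) ≤ 1 := by split_ifs <;> omega
      omega
    · -- π t = t contradicts t < iT
      exfalso
      have : t = iT := h.pi_inj ht hiT (by rw [hiTeq, ← hpt])
      omega
    · -- c2 : π t < t
      have hqt : Mz n ω < f t := h.pi_lt_imp_q hpt
      have hw : ¬ MinNF n ω f t := by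
        intro hm
        have := h.minNF_pi_gt ht hm
        omega
      rw [if_neg hw, hBBz hqt]
      have htRt : t ∉ Rt n ω f t := by
        unfold Rt; rw [Finset.mem_filter]
        rintro ⟨_, _, hcon⟩; omega
      have hcardR : ((Rt n ω f t).erase t) = Rt n ω f t := Finset.erase_eq_of_notMem htRt
      have hcard := Finset.card_le_card (hsubX2 hc)
      rw [Finset.card_product, hcardR] at hcard
      simp only [Finset.card_singleton, mul_one] at hcard
      omega
  · -- t = iT : fixed point
    have hfix : piF n ω f t = t := by rw [← hc] at hiTeq; exact hiTeq
    have hw : ¬ MinNF n ω f t := fun hm => hm.1 hfix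
    rw [if_neg hw]
    have htLt : iT ∉ Lt n ω f t := by
      unfold Lt; rw [Finset.mem_filter]
      rintro ⟨_, _, hcon⟩; omega
    have hcardL : ((Lt n ω f t).erase iT) = Lt n ω f t := Finset.erase_eq_of_notMem htLt
    have htRt : t ∉ Rt n ω f t := by
      unfold Rt; rw [Finset.mem_filter]
      rintro ⟨_, _, hcon⟩; omega
    have hcardR : ((Rt n ω f t).erase t) = Rt n ω f t := Finset.erase_eq_of_notMem htRt
    by_cases hqt : Mz n ω < f t
    · rw [hBBz hqt]
      have hcard := Finset.card_le_card (hsubX3 hfix hqt)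
      rw [Finset.card_product] at hcard
      simp only [Finset.card_singleton, mul_one] at hcard
      rw [hcardL] at hAA
      omega
    · rw [hAAz (Or.inr ⟨hc.symm, hqt⟩)]
      have hcard := Finset.card_le_card (hsubX4 hfix hqt)
      rw [Finset.card_product] at hcard
      simp only [Finset.card_singleton, one_mul] at hcard
      rw [hcardR] at hBB
      omega
  · -- iT < t
    rw [hAAz (Or.inl hc)]
    have hw : ¬ MinNF n ω f t := by
      intro hm
      have := hm.2 iT hiT hc
      omega
    rw [if_neg hw]
    rcases lt_trichotomy t (piF n ω f t) with hpt | hpt | hpt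
    · have htRt : t ∈ Rt n ω f t := by
        unfold Rt; rw [Finset.mem_filter]; exact ⟨ht, le_refl t, hpt⟩
      have hcardR : ((Rt n ω f t).erase t).card = (Rt n ω f t).card - 1 :=
        Finset.card_erase_of_mem htRt
      have hrpos : 1 ≤ (Rt n ω f t).card := Finset.card_pos.mpr ⟨t, htRt⟩
      have hcard := Finset.card_le_card (hsubX1 hpt)
      rw [Finset.card_product] at hcard
      simp only [Finset.card_singleton, one_mul] at hcard
      omega
    · exfalso
      have : t = iT := h.pi_inj ht hiT (by rw [hiTeq, ← hpt])
      omega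
    · have hqt : Mz n ω < f t := h.pi_lt_imp_q hpt
      rw [hBBz hqt]
      omega

lemma Hyp.fib_AA (h : Hyp n ω k f) :
    (IAA n ω f).card = ∑ t ∈ W n ω, ((IAA n ω f).filter (fun p => piF n ω f p.1 = t)).card := by
  apply Finset.card_eq_sum_card_fiberwise
  intro p hp
  unfold IAA at hp
  rw [Finset.mem_coe, Finset.mem_filter, Finset.mem_product] at hp
  exact h.pi_mem hp.1.1

lemma Hyp.fib_BB (h : Hyp n ω k f) :
    (IBB n ω f).card = ∑ t ∈ W n ω, ((IBB n ω f).filter (fun p => p.2 = t)).card := by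
  apply Finset.card_eq_sum_card_fiberwise
  intro p hp
  unfold IBB at hp
  rw [Finset.mem_coe, Finset.mem_filter, Finset.mem_product] at hp
  exact hp.1.2

lemma Hyp.fib_BA (h : Hyp n ω k f) :
    (IBA n ω f).card
      = ∑ t ∈ W n ω, ((IBA n ω f).filter (fun p => max p.1 (piF n ω f p.2) = t)).card := by
  apply Finset.card_eq_sum_card_fiberwise
  intro p hp
  unfold IBA at hp
  rw [Finset.mem_coe, Finset.mem_filter, Finset.mem_product] at hp
  have h1 := mem_W.mp hp.1.1
  have h2 := mem_W.mp (h.pi_mem hp.1.2)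
  rw [Finset.mem_coe, mem_W]
  constructor
  · exact le_max_of_le_left h1.1
  · exact max_le h1.2 h2.2

lemma Hyp.core_le (h : Hyp n ω k f) :
    (IAA n ω f).card + (IBB n ω f).card ≤ (IBA n ω f).card := by
  classical
  rw [h.fib_AA, h.fib_BB, h.fib_BA, ← Finset.sum_add_distrib]
  apply Finset.sum_le_sum
  intro t ht
  have := h.percut ht
  split_ifs at this <;> omega

lemma Hyp.core_lt (h : Hyp n ω k f) (hne : ∃ i ∈ W n ω, piF n ω f i ≠ i) :
    (IAA n ω f).card + (IBB n ω f).card < (IBA n ω f).card := by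
  classical
  obtain ⟨i0, hi0W, hi0⟩ := hne
  set S := (W n ω).filter (fun i => piF n ω f i ≠ i) with hS
  have hSne : S.Nonempty := ⟨i0, Finset.mem_filter.mpr ⟨hi0W, hi0⟩⟩
  set t0 := S.min' hSne with ht0
  have ht0S : t0 ∈ S := S.min'_mem hSne
  have ht0W : t0 ∈ W n ω := (Finset.mem_filter.mp ht0S).1
  have hmin : MinNF n ω f t0 := by
    constructor
    · exact (Finset.mem_filter.mp ht0S).2
    · intro s hsW hst
      by_contra hne'
      have : t0 ≤ s := S.min'_le s (Finset.mem_filter.mpr ⟨hsW, hne'⟩)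
      omega
  rw [h.fib_AA, h.fib_BB, h.fib_BA, ← Finset.sum_add_distrib]
  apply Finset.sum_lt_sum
  · intro t ht
    have := h.percut ht
    split_ifs at this <;> omega
  · refine ⟨t0, ht0W, ?_⟩
    have := h.percut ht0W
    rw [if_pos hmin] at this
    omega

lemma Hyp.inversionSet_eq (h : Hyp n ω k f) :
    inversionSet n f = ↑(J n ω f 0 (n:ℤ)) := by
  ext p
  rw [Finset.mem_coe, h.mem_J (Int.natCast_nonneg n)]
  unfold inversionSet
  constructor
  · rintro ⟨h1, h2, h3, h4⟩; exact ⟨by omega, h2, h3, h4⟩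
  · rintro ⟨h1, h2, h3, h4⟩; exact ⟨by omega, h2, h3, h4⟩

lemma Hyp.card_W (h : Hyp n ω k f) : (W n ω).card = ω * n := by
  unfold W
  rw [Int.card_Ioc]
  have e : (Mz n ω - 0) = ((ω*n : ℕ) : ℤ) := by push_cast [Mz]; ring
  rw [e, Int.toNat_natCast]

lemma Hyp.card_Bset (h : Hyp n ω k f) (hn : 1 ≤ n) (hω : 1 ≤ ω) (hkn : k ≤ n) :
    (Bset n ω f).card = ω * n - ω * k := by
  have hsplit := Finset.card_filter_add_card_filter_not
    (s := W n ω) (p := fun i => Mz n ω < f i)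
  have hA : ((W n ω).filter (fun i => Mz n ω < f i)).card = ω * k := h.card_Aset hn hω
  have hB : (Bset n ω f) = (W n ω).filter (fun i => ¬ Mz n ω < f i) := rfl
  rw [hB]
  have hW := h.card_W
  omega

/-- The master identity: `ω·l_n + invBA = ω²k(n-k) + invAA + invBB`. -/
lemma Hyp.master (h : Hyp n ω k f) (hn : 1 ≤ n) (hω : 1 ≤ ω) (hkn : k ≤ n) :
    ω * (J n ω f 0 (n:ℤ)).card + (IBA n ω f).card
      = ω * ω * k * (n - k) + (IAA n ω f).card + (IBB n ω f).card := by
  have h1 : (J n ω f 0 (Mz n ω)).card = ω * (J n ω f 0 (n:ℤ)).card := by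
    have := h.card_J_window ω
    unfold Mz
    exact this
  have h2 := h.card_J_eq_pairF hn hω
  have h3 := h.pairF_decomp
  have h4 := h.card_Aset hn hω
  have h5 := h.card_Bset hn hω hkn
  have h6 : (ω * k) * (ω * n - ω * k) = ω * ω * k * (n - k) := by
    have e : ω * (n - k) + ω * k = ω * n := by
      rw [← Nat.mul_add]
      congr 1
      omega
    have e2 : ω * n - ω * k = ω * (n - k) := by omega
    rw [e2]; ring
  unfold Aset at h4
  have h7 : (Aset n ω f).card * (Bset n ω f).card = ω * ω * k * (n - k) := by
    rw [← h6]
    unfold Aset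
    rw [h4, h5]
  omega

/-- the length bound -/
lemma Hyp.length_bound (h : Hyp n ω k f) (hn : 1 ≤ n) (hω : 1 ≤ ω) (hkn : k ≤ n) :
    (J n ω f 0 (n:ℤ)).card ≤ ω * k * (n - k) := by
  have hm := h.master hn hω hkn
  have hc := h.core_le
  have : ω * (J n ω f 0 (n:ℤ)).card ≤ ω * (ω * k * (n-k)) := by
    have : ω * ω * k * (n-k) = ω * (ω * k * (n-k)) := by ring
    omega
  exact Nat.le_of_mul_le_mul_left this (by omega)

/-- extremal window values from maximality -/
lemma Hyp.max_imp_extremal (h : Hyp n ω k f) (hn : 1 ≤ n) (hω : 1 ≤ ω) (hkn : k ≤ n)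
    (hmax : (J n ω f 0 (n:ℤ)).card = ω * k * (n - k)) :
    ∀ i ∈ W n ω, f i = i ∨ f i = i + Mz n ω := by
  have hm := h.master hn hω hkn
  have hid : ∀ i ∈ W n ω, piF n ω f i = i := by
    by_contra hcon
    push_neg at hcon
    obtain ⟨i, hiW, hine⟩ := hcon
    have := h.core_lt ⟨i, hiW, hine⟩
    rw [hmax] at hm
    have : ω * (ω * k * (n-k)) = ω * ω * k * (n-k) := by ring
    omega
  intro i hiW
  have hpi := hid i hiW
  by_cases hq : Mz n ω < f i
  · right; rw [piF_of_high hq] at hpi; omega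
  · left; rw [piF_of_low hq] at hpi; exact hpi

/-- decomposition of an integer into residue in `[1,n]` plus a multiple of `n` -/
lemma resid_decomp (hn : 1 ≤ n) (i : ℤ) :
    ∃ r s : ℤ, r ∈ Finset.Icc (1:ℤ) (n:ℤ) ∧ i = r + s * n := by
  have hn' : (0:ℤ) < n := by exact_mod_cast hn
  refine ⟨(i-1) % n + 1, (i-1) / n, ?_, ?_⟩
  · rw [Finset.mem_Icc]
    have h1 := Int.emod_nonneg (i-1) (by omega : (n:ℤ) ≠ 0)
    have h2 := Int.emod_lt_of_pos (i-1) hn'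
    omega
  · have h8 := Int.emod_add_mul_ediv (i-1) n
    have hcomm : (n:ℤ) * ((i-1)/n) = ((i-1)/n) * n := by ring
    omega

/-- extremal on the base window implies identity `piF` everywhere on `W` -/
lemma Hyp.extremal_spread (h : Hyp n ω k f) (hn : 1 ≤ n) (hω : 1 ≤ ω)
    (hext : ∀ i ∈ Finset.Icc (1:ℤ) (n:ℤ), f i = i ∨ f i = i + Mz n ω) :
    ∀ i ∈ W n ω, f i = i ∨ f i = i + Mz n ω := by
  intro i _
  obtain ⟨r, s, hr, hi⟩ := resid_decomp hn i
  have hfr := hext r hr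
  have : f i = f r + s * n := by rw [hi, h.per_int s r]
  rcases hfr with he | he
  · left; omega
  · right; omega

/-- extremal implies maximal length -/
lemma Hyp.extremal_imp_max (h : Hyp n ω k f) (hn : 1 ≤ n) (hω : 1 ≤ ω) (hkn : k ≤ n)
    (hext : ∀ i ∈ W n ω, f i = i ∨ f i = i + Mz n ω) :
    (J n ω f 0 (n:ℤ)).card = ω * k * (n - k) := by
  have hM : (0:ℤ) < Mz n ω := Mz_pos hn hω
  have hid : ∀ i ∈ W n ω, piF n ω f i = i := by
    intro i hiW
    have hb := mem_W.mp hiW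
    rcases hext i hiW with he | he
    · rw [piF_of_low (by omega)]; exact he
    · rw [piF_of_high (by omega)]; omega
  have hAA : (IAA n ω f) = ∅ := by
    ext p
    simp only [Finset.notMem_empty, iff_false]
    intro hp
    unfold IAA at hp
    rw [Finset.mem_filter, Finset.mem_product] at hp
    obtain ⟨⟨hW1, hW2⟩, hlt, _, _, hpi⟩ := hp
    rw [hid _ hW1, hid _ hW2] at hpi
    omega
  have hBB : (IBB n ω f) = ∅ := by
    ext p
    simp only [Finset.notMem_empty, iff_false]
    intro hp
    unfold IBB at hp
    rw [Finset.mem_filter, Finset.mem_product] at hp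
    obtain ⟨⟨hW1, hW2⟩, hlt, _, _, hpi⟩ := hp
    rw [hid _ hW1, hid _ hW2] at hpi
    omega
  have hBA : (IBA n ω f) = ∅ := by
    ext p
    simp only [Finset.notMem_empty, iff_false]
    intro hp
    unfold IBA at hp
    rw [Finset.mem_filter, Finset.mem_product] at hp
    obtain ⟨⟨hW1, hW2⟩, hlt, _, _, hpi⟩ := hp
    rw [hid _ hW1, hid _ hW2] at hpi
    omega
  have hm := h.master hn hω hkn
  rw [hAA, hBB, hBA] at hm
  simp only [Finset.card_empty, add_zero] at hm
  have : ω * (J n ω f 0 (n:ℤ)).card = ω * (ω * k * (n-k)) := by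
    have : ω * ω * k * (n-k) = ω * (ω * k * (n-k)) := by ring
    omega
  exact Nat.eq_of_mul_eq_mul_left (by omega) this

/-- residue representative in `[1,n]` -/
def residZ (n : ℕ) (a : ℤ) : ℤ := (a - 1) % (n:ℤ) + 1

/-- the extremal permutation attached to a subset `S ⊆ [1,n]` -/
def fS (n ω : ℕ) (S : Finset ℤ) : ℤ → ℤ :=
  fun a => a + (if residZ n a ∈ S then Mz n ω else 0)

lemma residZ_mem (hn : 1 ≤ n) (a : ℤ) : residZ n a ∈ Finset.Icc (1:ℤ) (n:ℤ) := by
  have hn' : (0:ℤ) < n := by exact_mod_cast hn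
  unfold residZ
  rw [Finset.mem_Icc]
  have h1 := Int.emod_nonneg (a-1) (by omega : (n:ℤ) ≠ 0)
  have h2 := Int.emod_lt_of_pos (a-1) hn'
  omega

lemma residZ_shift (a s : ℤ) : residZ n (a + s * n) = residZ n a := by
  unfold residZ
  have e : a + s * (n:ℤ) - 1 = (a - 1) + (n:ℤ) * s := by ring
  rw [e, Int.add_mul_emod_self_left]

lemma residZ_eq_self {a : ℤ} (ha : a ∈ Finset.Icc (1:ℤ) (n:ℤ)) : residZ n a = a := by
  rw [Finset.mem_Icc] at ha
  unfold residZ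
  rw [Int.emod_eq_of_lt (by omega) (by omega)]
  ring

lemma residZ_shift_M (a : ℤ) : residZ n (a + Mz n ω) = residZ n a := by
  have : Mz n ω = (ω:ℤ) * n := rfl
  rw [this, residZ_shift]

lemma fS_hyp (hn : 1 ≤ n) (hω : 1 ≤ ω) {S : Finset ℤ}
    (hsub : S ⊆ Finset.Icc (1:ℤ) (n:ℤ)) (hcard : S.card = k) :
    Hyp n ω k (fS n ω S) := by
  classical
  have hM : (0:ℤ) < Mz n ω := Mz_pos hn hω
  constructor
  · -- bijective
    rw [Function.bijective_iff_has_inverse]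
    refine ⟨fun b => b - (if residZ n b ∈ S then Mz n ω else 0), ?_, ?_⟩
    · intro a
      dsimp only
      unfold fS
      by_cases hc : residZ n a ∈ S
      · rw [if_pos hc]
        rw [residZ_shift_M, if_pos hc]
        ring
      · rw [if_neg hc]
        simp only [add_zero]
        rw [if_neg hc]
        ring
    · intro b
      dsimp only
      unfold fS
      by_cases hc : residZ n b ∈ S
      · rw [if_pos hc]
        have e : b - Mz n ω = b + (-(ω:ℤ)) * n := by
          unfold Mz; ring
        have e2 : residZ n (b - Mz n ω) = residZ n b := by
          rw [e, residZ_shift]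
        rw [e2, if_pos hc]
        ring
      · rw [if_neg hc]
        simp only [sub_zero]
        rw [if_neg hc]
        ring
  · -- periodicity
    intro a
    unfold fS
    have e : a + (n:ℤ) = a + 1 * n := by ring
    rw [e, residZ_shift]
    ring
  · -- sum
    have hterm : ∀ a ∈ Finset.Icc (1:ℤ) (n:ℤ),
        fS n ω S a - a = (if a ∈ S then Mz n ω else 0) := by
      intro a ha
      unfold fS
      rw [residZ_eq_self ha]
      ring
    rw [Finset.sum_congr rfl hterm, Finset.sum_ite, Finset.sum_const_zero, add_zero,
      Finset.sum_const]
    have hfilter : (Finset.Icc (1:ℤ) (n:ℤ)).filter (fun a => a ∈ S) = S := by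
      ext x
      rw [Finset.mem_filter]
      constructor
      · rintro ⟨_, hx⟩; exact hx
      · intro hx; exact ⟨hsub hx, hx⟩
    rw [hfilter, hcard]
    unfold Mz
    push_cast
    ring
  · -- low
    intro a
    unfold fS
    split_ifs <;> omega
  · -- high
    intro a
    unfold fS
    have : Mz n ω = (ω:ℤ) * n := rfl
    split_ifs <;> omega

lemma fS_extremal (hn : 1 ≤ n) {S : Finset ℤ} (a : ℤ) (ha : a ∈ Finset.Icc (1:ℤ) (n:ℤ)) :
    fS n ω S a = a ∨ fS n ω S a = a + Mz n ω := by
  unfold fS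
  split_ifs
  · right; rfl
  · left; ring

lemma fS_injOn (hn : 1 ≤ n) (hω : 1 ≤ ω) {S S' : Finset ℤ}
    (hsub : S ⊆ Finset.Icc (1:ℤ) (n:ℤ)) (hsub' : S' ⊆ Finset.Icc (1:ℤ) (n:ℤ))
    (heq : fS n ω S = fS n ω S') : S = S' := by
  have hM : (0:ℤ) < Mz n ω := Mz_pos hn hω
  ext x
  constructor
  · intro hx
    have hxI := hsub hx
    have := congrFun heq x
    unfold fS at this
    rw [residZ_eq_self hxI] at this
    rw [if_pos hx] at this
    by_contra hx'
    rw [if_neg hx'] at this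
    omega
  · intro hx
    have hxI := hsub' hx
    have := congrFun heq x
    unfold fS at this
    rw [residZ_eq_self hxI] at this
    rw [if_pos hx] at this
    by_contra hx'
    rw [if_neg hx'] at this
    omega

lemma mem_B_iff_hyp : f ∈ BoundedAffinePermutations n ω k ↔ Hyp n ω k f := by
  unfold BoundedAffinePermutations
  rw [Set.mem_setOf_eq]
  constructor
  · rintro ⟨h1, h2, h3, h4⟩
    exact ⟨h1, h2, h3, fun a => (h4 a).1, fun a => (h4 a).2⟩
  · rintro ⟨h1, h2, h3, h4, h5⟩
    exact ⟨h1, h2, h3, fun a => ⟨h4 a, h5 a⟩⟩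

lemma Icc_subset_W (hn : 1 ≤ n) (hω : 1 ≤ ω) :
    Finset.Icc (1:ℤ) (n:ℤ) ⊆ W n ω := by
  intro x hx
  rw [Finset.mem_Icc] at hx
  rw [mem_W]
  have h1 : (1:ℤ) ≤ (ω:ℤ) := by exact_mod_cast hω
  have h2 : (0:ℤ) ≤ (n:ℤ) := Int.natCast_nonneg n
  have : (n:ℤ) ≤ Mz n ω := by
    unfold Mz
    nlinarith
  omega

lemma max_set_eq (hn : 1 ≤ n) (hω : 1 ≤ ω) (hkn : k ≤ n) :
    {f ∈ BoundedAffinePermutations n ω k |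
      (inversionSet n f).ncard = ω * k * (n - k)}
    = (fun S => fS n ω S) '' ↑((Finset.Icc (1:ℤ) (n:ℤ)).powersetCard k) := by
  classical
  have hM : (0:ℤ) < Mz n ω := Mz_pos hn hω
  ext f
  rw [Set.mem_sep_iff, Set.mem_image]
  constructor
  · rintro ⟨hB, hmax⟩
    have h : Hyp n ω k f := mem_B_iff_hyp.mp hB
    rw [h.inversionSet_eq, Set.ncard_coe_finset] at hmax
    have hext := h.max_imp_extremal hn hω hkn hmax
    refine ⟨(Finset.Icc (1:ℤ) (n:ℤ)).filter (fun i => f i = i + Mz n ω), ?_, ?_⟩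
    · -- membership in powersetCard
      rw [Finset.mem_coe, Finset.mem_powersetCard]
      refine ⟨Finset.filter_subset _ _, ?_⟩
      -- cardinality k from the sum condition
      have hterm : ∀ a ∈ Finset.Icc (1:ℤ) (n:ℤ), f a - a
          = (if a ∈ (Finset.Icc (1:ℤ) (n:ℤ)).filter (fun i => f i = i + Mz n ω)
              then Mz n ω else 0) := by
        intro a ha
        by_cases hc : a ∈ (Finset.Icc (1:ℤ) (n:ℤ)).filter (fun i => f i = i + Mz n ω)
        · rw [if_pos hc]
          rw [Finset.mem_filter] at hc
          omega
        · rw [if_neg hc]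
          rcases hext a (Icc_subset_W hn hω ha) with he | he
          · omega
          · exfalso; exact hc (Finset.mem_filter.mpr ⟨ha, he⟩)
      have hsum := h.hsum
      rw [Finset.sum_congr rfl hterm, Finset.sum_ite, Finset.sum_const_zero, add_zero,
        Finset.sum_const] at hsum
      have e0 : (Finset.Icc (1:ℤ) (n:ℤ)).filter
            (fun a => a ∈ (Finset.Icc (1:ℤ) (n:ℤ)).filter (fun i => f i = i + Mz n ω))
          = (Finset.Icc (1:ℤ) (n:ℤ)).filter (fun i => f i = i + Mz n ω) := by
        ext x
        simp only [Finset.mem_filter]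
        tauto
      rw [e0] at hsum
      have hk2 : (((Finset.Icc (1:ℤ) (n:ℤ)).filter (fun i => f i = i + Mz n ω)).card : ℤ)
          * Mz n ω = (k:ℤ) * Mz n ω := by
        rw [nsmul_eq_mul] at hsum
        rw [hsum]
        unfold Mz
        ring
      have := mul_right_cancel₀ (ne_of_gt hM) hk2
      exact_mod_cast this
    · -- f = fS S
      funext a
      obtain ⟨r, s, hr, ha⟩ := resid_decomp hn a
      have hfa : f a = f r + s * n := by rw [ha, h.per_int s r]
      have hresid : residZ n a = r := by
        rw [ha, residZ_shift, residZ_eq_self hr]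
      unfold fS
      rw [hresid]
      by_cases hc : r ∈ (Finset.Icc (1:ℤ) (n:ℤ)).filter (fun i => f i = i + Mz n ω)
      · rw [if_pos hc]
        rw [Finset.mem_filter] at hc
        omega
      · rw [if_neg hc]
        rcases hext r (Icc_subset_W hn hω hr) with he | he
        · omega
        · exfalso; exact hc (Finset.mem_filter.mpr ⟨hr, he⟩)
  · rintro ⟨S, hSmem, rfl⟩
    rw [Finset.mem_coe, Finset.mem_powersetCard] at hSmem
    have h : Hyp n ω k (fS n ω S) := fS_hyp hn hω hSmem.1 hSmem.2
    refine ⟨mem_B_iff_hyp.mpr h, ?_⟩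
    rw [h.inversionSet_eq, Set.ncard_coe_finset]
    exact h.extremal_imp_max hn hω hkn
      (h.extremal_spread hn hω (fun i hi => fS_extremal hn i hi))

end BAP

/-- Every `(k,n,ω)` bounded affine permutation has a finite inversion set of
cardinality at most `ωk(n−k)`, and the number of bounded affine permutations whose
inversion set has cardinality exactly `ωk(n−k)` is the binomial coefficient `C(n,k)`. -/
theorem boundedAffinePermutations_length_bound_and_top_count
    (n ω k : ℕ) (hn : 1 ≤ n) (hω : 1 ≤ ω) (hk : 1 ≤ k) (hkn : k ≤ n) :
    (∀ f ∈ BoundedAffinePermutations n ω k,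
      (inversionSet n f).Finite ∧ (inversionSet n f).ncard ≤ ω * k * (n - k)) ∧
    {f ∈ BoundedAffinePermutations n ω k |
      (inversionSet n f).ncard = ω * k * (n - k)}.ncard = n.choose k := by
  constructor
  · intro f hB
    have h : BAP.Hyp n ω k f := BAP.mem_B_iff_hyp.mp hB
    constructor
    · rw [h.inversionSet_eq]
      exact Finset.finite_toSet _
    · rw [h.inversionSet_eq, Set.ncard_coe_finset]
      exact h.length_bound hn hω hkn
  · rw [BAP.max_set_eq hn hω hkn]
    have hinj : Set.InjOn (fun S => BAP.fS n ω S)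
        ↑((Finset.Icc (1:ℤ) (n:ℤ)).powersetCard k) := by
      intro S hS S' hS' heq
      rw [Finset.mem_coe, Finset.mem_powersetCard] at hS hS'
      exact BAP.fS_injOn hn hω hS.1 hS'.1 heq
    rw [Set.ncard_image_of_injOn hinj, Set.ncard_coe_finset, Finset.card_powersetCard,
      Int.card_Icc]
    congr 1
    omega
end

section
/- Fix integers n ≥ 1, ω ≥ 1 and 1 ≤ k ≤ n. The constant tuple z with z_j = kω for every j ∈ ℤ/nℤ lies in C(k,n,ω), and for every ℓ ∈ C(k,n,ω) there is a finite sequence of moment-graph edges leading from ℓ to z; in particular z is the unique minimal element of C(k,n,ω) with respect to the partial order generated by the moment-graph edges. -/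
/-- The moment-graph edge relation on length tuples: `ℓ → ℓ'` if `ℓ' = f_{i,j,r}(ℓ)` for a
valid cut-and-paste move with `r ≥ 1` and `ℓ i > ℓ j + r`. -/
def MomentEdge (n ω : ℕ) (ℓ ℓ' : ZMod n → ℕ) : Prop :=
  ∃ (i j : ZMod n) (r : ℕ), i ≠ j ∧ 1 ≤ r ∧ r ≤ ℓ i ∧ ℓ j + r ≤ ω * n ∧
    i + (ℓ i : ZMod n) = j + (ℓ j : ZMod n) + (r : ZMod n) ∧
    ℓ j + r < ℓ i ∧ ℓ' = cutPaste n ℓ i j r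

/-!
Lift `j ↦ j + ℓ j` to the bijection `w a = a + ℓ (a mod n)` of `ℤ`. If `w` is increasing it is a
translation, so `ℓ` is constant, and the sum condition forces `ℓ = z`. Otherwise an inversion
`a < b`, `w b < w a` gives an edge moving `r = w a - w b` from `a` to `b`: it composes the
permutation `j ↦ j + ℓ j` with a transposition, so it stays in `C(k,n,ω)`, and it strictly lowers
`∑ ℓ j ^ 2`. Descending along such edges therefore ends at `z`.
-/

open Function Finset

theorem Int.map_add_one_of_strictMono_of_surjective {f : ℤ → ℤ} (hmono : StrictMono f)
    (hsurj : Surjective f) (a : ℤ) : f (a + 1) = f a + 1 := by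
  simpa [Order.succ_eq_add_one] using (hmono.orderIsoOfSurjective f hsurj).map_succ a

theorem Int.eq_add_of_strictMono_of_surjective {f : ℤ → ℤ} (hmono : StrictMono f)
    (hsurj : Surjective f) (a : ℤ) : f a = f 0 + a := by
  induction a using Int.induction_on with
  | zero => simp
  | succ a ih => rw [Int.map_add_one_of_strictMono_of_surjective hmono hsurj, ih]; ring
  | pred a ih =>
    have := Int.map_add_one_of_strictMono_of_surjective hmono hsurj (-(a : ℤ) - 1)
    rw [sub_add_cancel, ih] at this
    linarith

section cutPaste

variable {n : ℕ} (ℓ : ZMod n → ℕ) {i j : ZMod n} (r : ℕ)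

@[simp]
theorem cutPaste_apply_left : cutPaste n ℓ i j r i = ℓ i - r := by
  simp [cutPaste]

@[simp]
theorem cutPaste_apply_right (hij : i ≠ j) : cutPaste n ℓ i j r j = ℓ j + r := by
  simp [cutPaste, hij.symm]

theorem cutPaste_apply_of_ne {s : ZMod n} (hsi : s ≠ i) (hsj : s ≠ j) :
    cutPaste n ℓ i j r s = ℓ s := by
  simp [cutPaste, hsi, hsj]

theorem sum_comp_cutPaste_add {M : Type*} [AddCommMonoid M] [NeZero n] (G : ℕ → M)
    (hij : i ≠ j) :
    ∑ s, G (cutPaste n ℓ i j r s) + (G (ℓ i) + G (ℓ j)) =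
      ∑ s, G (ℓ s) + (G (ℓ i - r) + G (ℓ j + r)) := by
  have hj : j ∈ univ.erase i := mem_erase.2 ⟨hij.symm, mem_univ j⟩
  have split : ∀ f : ZMod n → ℕ,
      ∑ s, G (f s) = G (f i) + (G (f j) + ∑ s ∈ (univ.erase i).erase j, G (f s)) := fun f => by
    rw [add_sum_erase _ (fun s => G (f s)) hj, add_sum_erase _ (fun s => G (f s)) (mem_univ i)]
  have rest : ∑ s ∈ (univ.erase i).erase j, G (cutPaste n ℓ i j r s) =
      ∑ s ∈ (univ.erase i).erase j, G (ℓ s) := sum_congr rfl fun s hs => by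
    simp only [mem_erase] at hs
    rw [cutPaste_apply_of_ne ℓ r hs.2.1 hs.1]
  rw [split (cutPaste n ℓ i j r), split ℓ, rest, cutPaste_apply_left,
    cutPaste_apply_right ℓ r hij]
  abel

theorem add_cutPaste_eq_swap_comp (hle : r ≤ ℓ i)
    (hij : i ≠ j) (hcong : i + (ℓ i : ZMod n) = j + (ℓ j : ZMod n) + (r : ZMod n))
    (hinj : Injective fun s : ZMod n => s + (ℓ s : ZMod n)) :
    (fun s => s + (cutPaste n ℓ i j r s : ZMod n)) =
      Equiv.swap (i + (ℓ i : ZMod n)) (j + (ℓ j : ZMod n)) ∘ fun s => s + (ℓ s : ZMod n) := by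
  funext s
  by_cases hsi : s = i
  · subst hsi
    rw [comp_apply, Equiv.swap_apply_left, cutPaste_apply_left, Nat.cast_sub hle]
    linear_combination hcong
  by_cases hsj : s = j
  · subst hsj
    rw [comp_apply, Equiv.swap_apply_right, cutPaste_apply_right ℓ r hij, hcong]
    push_cast; ring
  rw [comp_apply, cutPaste_apply_of_ne ℓ r hsi hsj,
    Equiv.swap_apply_of_ne_of_ne (hinj.ne hsi) (hinj.ne hsj)]

end cutPaste

theorem Nat.sub_sq_add_add_sq_lt {a b r : ℕ} (hr : 0 < r) (hlt : b + r < a) :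
    (a - r) ^ 2 + (b + r) ^ 2 < a ^ 2 + b ^ 2 := by
  obtain ⟨c, rfl⟩ : ∃ c, a = c + r := ⟨a - r, by omega⟩
  rw [Nat.add_sub_cancel]
  nlinarith

namespace MomentEdge

variable {n ω : ℕ} [NeZero n] {ℓ ℓ' : ZMod n → ℕ}

theorem mem_Ctuples {k : ℕ} (h : MomentEdge n ω ℓ ℓ') (hℓ : ℓ ∈ Ctuples n ω k) :
    ℓ' ∈ Ctuples n ω k := by
  obtain ⟨i, j, r, hij, -, hle, hbound, hcong, -, rfl⟩ := h
  obtain ⟨hℓbound, hsum, hbij⟩ := hℓ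
  refine ⟨fun s => ?_, ?_, ?_⟩
  · by_cases hsi : s = i
    · rw [hsi, cutPaste_apply_left]
      exact (Nat.sub_le _ _).trans (hℓbound i)
    by_cases hsj : s = j
    · rwa [hsj, cutPaste_apply_right ℓ r hij]
    rw [cutPaste_apply_of_ne ℓ r hsi hsj]
    exact hℓbound s
  · have := sum_comp_cutPaste_add ℓ r id hij
    simp only [id] at this
    omega
  · rw [add_cutPaste_eq_swap_comp ℓ r hle hij hcong hbij.1]
    exact (Equiv.swap _ _).bijective.comp hbij

theorem sum_sq_lt (h : MomentEdge n ω ℓ ℓ') : ∑ j, ℓ' j ^ 2 < ∑ j, ℓ j ^ 2 := by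
  obtain ⟨i, j, r, hij, hr, -, -, -, hlt, rfl⟩ := h
  have := sum_comp_cutPaste_add ℓ r (· ^ 2) hij
  have := Nat.sub_sq_add_add_sq_lt hr hlt
  omega

end MomentEdge

section liftShift

variable {n : ℕ} (ℓ : ZMod n → ℕ)

def liftShift (a : ℤ) : ℤ := a + ℓ a

theorem liftShift_intCast (a : ℤ) : (liftShift ℓ a : ZMod n) = a + (ℓ a : ZMod n) := by
  simp [liftShift]

variable {ℓ}

theorem injective_liftShift (hinj : Injective fun j : ZMod n => j + (ℓ j : ZMod n)) :
    Injective (liftShift ℓ) := by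
  intro a b h
  have hmod : (a : ZMod n) = b := hinj <| by
    simpa [liftShift_intCast] using congrArg (fun t : ℤ => (t : ZMod n)) h
  simp only [liftShift, hmod] at h
  omega

theorem surjective_liftShift (hsurj : Surjective fun j : ZMod n => j + (ℓ j : ZMod n)) :
    Surjective (liftShift ℓ) := by
  intro c
  obtain ⟨j, hj⟩ := hsurj c
  have hcast : ((c - ℓ j : ℤ) : ZMod n) = j := by
    push_cast
    linear_combination -hj
  exact ⟨c - ℓ j, by simp [liftShift, hcast]⟩

theorem eq_of_strictMono_liftShift (hmono : StrictMono (liftShift ℓ))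
    (hsurj : Surjective (liftShift ℓ)) (x y : ZMod n) : ℓ x = ℓ y := by
  have hconst : ∀ a : ℤ, ℓ a = ℓ 0 := fun a => by
    have := Int.eq_add_of_strictMono_of_surjective hmono hsurj a
    simp only [liftShift, Int.cast_zero] at this
    omega
  obtain ⟨a, rfl⟩ := ZMod.intCast_surjective x
  obtain ⟨b, rfl⟩ := ZMod.intCast_surjective y
  rw [hconst, hconst]

theorem momentEdge_of_liftShift_lt {ω : ℕ} (hbound : ∀ j, ℓ j ≤ ω * n) {a b : ℤ} (hab : a < b)
    (hlt : liftShift ℓ b < liftShift ℓ a) :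
    MomentEdge n ω ℓ (cutPaste n ℓ a b (liftShift ℓ a - liftShift ℓ b).toNat) := by
  set r := (liftShift ℓ a - liftShift ℓ b).toNat
  have hr : (r : ℤ) = liftShift ℓ a - liftShift ℓ b := Int.toNat_of_nonneg (by omega)
  have hij : (a : ZMod n) ≠ b := fun h => by
    simp only [liftShift, h] at hlt
    omega
  have hrlt : ℓ b + r < ℓ a := by
    simp only [liftShift] at hr
    omega
  refine ⟨a, b, r, hij, by omega, by omega, by linarith [hbound a], ?_, hrlt, rfl⟩
  rw [← liftShift_intCast, ← liftShift_intCast, ← Int.cast_natCast, hr]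
  push_cast
  ring

end liftShift

section Ctuples

variable {n ω k : ℕ} [NeZero n] {ℓ : ZMod n → ℕ}

theorem exists_momentEdge_of_mem_Ctuples (hℓ : ℓ ∈ Ctuples n ω k) {x y : ZMod n}
    (hne : ℓ x ≠ ℓ y) : ∃ ℓ', MomentEdge n ω ℓ ℓ' := by
  obtain ⟨hbound, -, hbij⟩ := hℓ
  have hinj := injective_liftShift hbij.1
  have hsurj := surjective_liftShift hbij.2
  have hinv : ¬StrictMono (liftShift ℓ) := fun hmono =>
    hne (eq_of_strictMono_liftShift hmono hsurj x y)
  obtain ⟨a, b, hab, hba⟩ : ∃ a b, a < b ∧ liftShift ℓ b ≤ liftShift ℓ a := by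
    simpa [StrictMono] using hinv
  have hlt : liftShift ℓ b < liftShift ℓ a := hba.lt_of_ne (hinj.ne hab.ne')
  exact ⟨_, momentEdge_of_liftShift_lt hbound hab hlt⟩

theorem const_mem_Ctuples (hkn : k ≤ n) : (fun _ => k * ω) ∈ Ctuples n ω k := by
  refine ⟨fun _ => ?_, ?_, (Equiv.addRight _).bijective⟩
  · rw [mul_comm ω]
    exact Nat.mul_le_mul_right ω hkn
  · simp only [sum_const, card_univ, ZMod.card, smul_eq_mul]
    ring

theorem eq_const_of_mem_Ctuples (hℓ : ℓ ∈ Ctuples n ω k) (hconst : ∀ x y, ℓ x = ℓ y) :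
    ℓ = fun _ => k * ω := by
  have hsum : n * ℓ 0 = n * (k * ω) :=
    calc n * ℓ 0 = ∑ x, ℓ x := by simp [hconst _ 0]
      _ = n * (k * ω) := by rw [hℓ.2.1]; ring
  funext x
  rw [hconst x 0]
  exact Nat.eq_of_mul_eq_mul_left (NeZero.pos n) hsum

theorem reflTransGen_const_of_mem_Ctuples (hℓ : ℓ ∈ Ctuples n ω k) :
    Relation.ReflTransGen (MomentEdge n ω) ℓ fun _ => k * ω := by
  induction hS : ∑ j, ℓ j ^ 2 using Nat.strong_induction_on generalizing ℓ with
  | _ S ih =>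
    by_cases hconst : ∀ x y, ℓ x = ℓ y
    · rw [eq_const_of_mem_Ctuples hℓ hconst]
    simp only [not_forall] at hconst
    obtain ⟨x, y, hne⟩ := hconst
    obtain ⟨ℓ', hedge⟩ := exists_momentEdge_of_mem_Ctuples hℓ hne
    exact .head hedge (ih _ (hS ▸ hedge.sum_sq_lt) (hedge.mem_Ctuples hℓ) rfl)

end Ctuples

theorem constant_tuple_is_unique_minimal_general
    (n ω k : ℕ) [NeZero n] (hkn : k ≤ n)
    (z : ZMod n → ℕ) (hz : ∀ j, z j = k * ω) :
    z ∈ Ctuples n ω k ∧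
    (∀ ℓ ∈ Ctuples n ω k, Relation.ReflTransGen (MomentEdge n ω) ℓ z) ∧
    (∀ z' ∈ Ctuples n ω k,
      (∀ ℓ ∈ Ctuples n ω k, Relation.ReflTransGen (MomentEdge n ω) z' ℓ → ℓ = z') →
      z' = z) := by
  obtain rfl : z = fun _ => k * ω := funext hz
  have hreach (ℓ) (hℓ : ℓ ∈ Ctuples n ω k) := reflTransGen_const_of_mem_Ctuples hℓ
  exact ⟨const_mem_Ctuples hkn, hreach, fun z' hz' hmin =>
    (hmin _ (const_mem_Ctuples hkn) (hreach z' hz')).symm⟩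

/-- The constant tuple `z ≡ kω` lies in `C(k,n,ω)`, every `ℓ ∈ C(k,n,ω)`
admits a finite sequence of moment-graph edges leading to `z`, and `z` is the unique
minimal element of `C(k,n,ω)` for the order generated by the moment-graph edges. -/
theorem constant_tuple_is_unique_minimal
    (n ω k : ℕ) [NeZero n] (hω : 1 ≤ ω) (hk : 1 ≤ k) (hkn : k ≤ n)
    (z : ZMod n → ℕ) (hz : ∀ j, z j = k * ω) :
    z ∈ Ctuples n ω k ∧
    (∀ ℓ ∈ Ctuples n ω k, Relation.ReflTransGen (MomentEdge n ω) ℓ z) ∧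
    (∀ z' ∈ Ctuples n ω k,
      (∀ ℓ ∈ Ctuples n ω k, Relation.ReflTransGen (MomentEdge n ω) z' ℓ → ℓ = z') →
      z' = z) :=
  constant_tuple_is_unique_minimal_general n ω k hkn z hz
end

section
/- Fix integers n ≥ 1, ω ≥ 1 and 1 ≤ k ≤ n. Let R = ℚ[ε_1,…,ε_n,δ] be a polynomial ring, the indices of the variables ε taken in ℤ/nℤ, and for m ∈ ℤ/nℤ let σ_m be the ℚ-algebra automorphism of R with σ_m(ε_i) = ε_{i−m} and σ_m(δ) = δ. For m ∈ ℤ/nℤ and ℓ ∈ C(k,n,ω) define (m·ℓ)_j := ℓ_{j−m}. Then: (a) m·ℓ ∈ C(k,n,ω); and (b) if a family (z_ℓ)_{ℓ ∈ C(k,n,ω)} of elements of R satisfies, for every ℓ ∈ C(k,n,ω) and every valid cut-and-paste move f_{i,j,r} with ℓ_i > ℓ_j + r, that ε_j − ε_i + (ℓ_i − ℓ_j − r)·δ divides z_ℓ − z_{f_{i,j,r}(ℓ)} in R, then the family (z'_ℓ) defined by z'_ℓ := σ_m(z_{m·ℓ}) satisfies the same divisibility conditions. -/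
open MvPolynomial

/-- Validity of the cut-and-paste move `f_{i,j,r}` at `ℓ`. -/
def ValidMove (n ω : ℕ) (ℓ : ZMod n → ℕ) (i j : ZMod n) (r : ℕ) : Prop :=
  i ≠ j ∧ r ≤ ℓ i ∧ ℓ j + r ≤ ω * n ∧
    i + (ℓ i : ZMod n) = j + (ℓ j : ZMod n) + (r : ZMod n)

/-- The polynomial ring `R = ℚ[ε_1,…,ε_n,δ]`, with the `ε` variables indexed by `ℤ/nℤ`. -/
abbrev Rring (n : ℕ) := MvPolynomial (ZMod n ⊕ Unit) ℚ

/-- The variable `ε_i`. -/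
noncomputable def ε {n : ℕ} (i : ZMod n) : Rring n := X (Sum.inl i)

/-- The variable `δ`. -/
noncomputable def δpoly (n : ℕ) : Rring n := X (Sum.inr ())

/-- The automorphism `σ_m` of `R` with `σ_m (ε_i) = ε_{i−m}` and `σ_m δ = δ`. -/
noncomputable def σauto (n : ℕ) (m : ZMod n) : Rring n →ₐ[ℚ] Rring n :=
  rename (Sum.map (fun i => i - m) id)

/-- Rotating the index by `m ∈ ℤ/nℤ` preserves `C(k,n,ω)`, and if a family
`(z_ℓ)` of polynomials satisfies the GKM divisibility conditions
`ε_j − ε_i + (ℓ_i − ℓ_j − r)·δ ∣ z_ℓ − z_{f_{i,j,r}(ℓ)}` along all moment-graph edges,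
then so does the rotated family `z'_ℓ := σ_m (z_{m·ℓ})`. -/
theorem cyclic_action_on_equivariant_cohomology
    (n ω k : ℕ) [NeZero n] (hω : 1 ≤ ω) (hk : 1 ≤ k) (hkn : k ≤ n)
    (m : ZMod n)
    (z : (ZMod n → ℕ) → Rring n)
    (hz : ∀ ℓ ∈ Ctuples n ω k, ∀ (i j : ZMod n) (r : ℕ),
      ValidMove n ω ℓ i j r → ℓ j + r < ℓ i →
      (ε j - ε i + ((ℓ i - ℓ j - r : ℕ) : Rring n) * δpoly n) ∣
        (z ℓ - z (cutPaste n ℓ i j r))) :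
    (∀ ℓ ∈ Ctuples n ω k, (fun j : ZMod n => ℓ (j - m)) ∈ Ctuples n ω k) ∧
    (∀ ℓ ∈ Ctuples n ω k, ∀ (i j : ZMod n) (r : ℕ),
      ValidMove n ω ℓ i j r → ℓ j + r < ℓ i →
      (ε j - ε i + ((ℓ i - ℓ j - r : ℕ) : Rring n) * δpoly n) ∣
        (σauto n m (z fun s : ZMod n => ℓ (s - m)) -
          σauto n m (z fun s : ZMod n => cutPaste n ℓ i j r (s - m)))) := by

  have rot : ∀ ℓ ∈ Ctuples n ω k, (fun j : ZMod n => ℓ (j - m)) ∈ Ctuples n ω k := by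
    intro ℓ ⟨h1, h2, h3⟩
    refine ⟨fun j => h1 _, ?_, ?_⟩
    · rw [← h2]
      exact Fintype.sum_equiv (Equiv.subRight m) _ _ (fun j => rfl)
    · have : (fun j : ZMod n => j + ((ℓ (j - m) : ℕ) : ZMod n)) =
          (fun t : ZMod n => t + m) ∘ (fun t : ZMod n => t + (ℓ t : ZMod n)) ∘
            (fun j : ZMod n => j - m) := by
        funext j
        simp [Function.comp]
        ring
      rw [this]
      exact ((Equiv.addRight m).bijective.comp h3).comp (Equiv.subRight m).bijective
  refine ⟨rot, ?_⟩
  intro ℓ hℓ i j r hv hlt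
  obtain ⟨hij, hri, hjr, heq⟩ := hv
  have hcp : cutPaste n (fun s : ZMod n => ℓ (s - m)) (i + m) (j + m) r =
      fun s : ZMod n => cutPaste n ℓ i j r (s - m) := by
    funext s
    simp only [cutPaste]
    by_cases h1 : s - m = i
    · rw [sub_eq_iff_eq_add] at h1
      simp [h1]
    · have h1' : ¬ s = i + m := fun h => h1 (by rw [h]; ring)
      by_cases h2 : s - m = j
      · rw [sub_eq_iff_eq_add] at h2
        simp [h2, h1, h1', hij, sub_eq_iff_eq_add]
      · have h2' : ¬ s = j + m := fun h => h2 (by rw [h]; ring)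
        simp [h1, h1', h2, h2']
  have hv' : ValidMove n ω (fun s : ZMod n => ℓ (s - m)) (i + m) (j + m) r := by
    refine ⟨by simpa using hij, by simpa using hri, by simpa using hjr, ?_⟩
    simp only [add_sub_cancel_right]
    rw [add_right_comm, heq]; ring
  have hdvd := hz _ (rot ℓ hℓ) (i + m) (j + m) r hv' (by simpa using hlt)
  rw [hcp] at hdvd
  have := (σauto n m).toRingHom.map_dvd hdvd
  have hε : ∀ t : ZMod n, σauto n m (ε t) = ε (t - m) := fun t => by
    simp [σauto, ε, rename_X]
  have hδ : σauto n m (δpoly n) = δpoly n := by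
    simp [σauto, δpoly, rename_X]
  simp only [AlgHom.toRingHom_eq_coe, RingHom.coe_coe, add_sub_cancel_right, map_add,
    map_sub, map_mul, map_natCast, hε, hδ] at this
  simpa [add_sub_cancel_right, hε, hδ] using this
end

section
/- Let 1 ≤ k ≤ n and ω ≥ 1 be integers and let I ⊆ {1,…,n} with |I| = k. Define w : ℤ → ℤ by w(i + rn) = i − kω + rn + nω·χ_I(i) for i ∈ {1,…,n} and r ∈ ℤ, where χ_I(i) = 1 if i ∈ I and 0 otherwise. Then w is a bijection of ℤ satisfying w(a+n) = w(a) + n for all a ∈ ℤ and Σ_{i=1}^n (w(i) − i) = 0; that is, w is a (0,n) affine permutation, hence an element of the affine Weyl group of type A_{n−1}^{(1)}. -/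
/-!
Writing `a = i + r n` with `1 ≤ i ≤ n`, the defining formula shows `w (a + n) = w a + n` and
`w a ≡ a - kω (mod n)`, since the correction term `nω·χ_I(i)` is a multiple of `n`. A map
commuting with translation by `n` that induces a bijection (here a rotation) on residues mod `n`
is a bijection of `ℤ`. The sum is `|I| · nω - n · kω = 0`.
-/

open Function Finset

theorem Finset.map_natCast_Icc (a b : ℕ) :
    (Icc a b).map Nat.castEmbedding = Icc (a : ℤ) b := by
  ext x
  simp only [mem_map, mem_Icc, Nat.castEmbedding_apply]
  constructor
  · rintro ⟨i, ⟨hai, hib⟩, rfl⟩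
    exact ⟨by exact_mod_cast hai, by exact_mod_cast hib⟩
  · rintro ⟨hax, hxb⟩
    exact ⟨x.toNat, ⟨by omega, by omega⟩, by omega⟩

theorem Finset.sum_Icc_natCast {M : Type*} [AddCommMonoid M] (f : ℤ → M) (a b : ℕ) :
    ∑ i ∈ Icc (a : ℤ) b, f i = ∑ i ∈ Icc a b, f i := by
  rw [← map_natCast_Icc, sum_map]
  rfl

theorem Int.exists_eq_natCast_add_mul {n : ℕ} (hn : 0 < n) (a : ℤ) :
    ∃ i : ℕ, 1 ≤ i ∧ i ≤ n ∧ ∃ r : ℤ, a = i + r * n := by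
  have hn' : (0 : ℤ) < n := by exact_mod_cast hn
  have hlt := Int.emod_lt_of_pos (a - 1) hn'
  have hnonneg := Int.emod_nonneg (a - 1) hn'.ne'
  refine ⟨((a - 1) % n).toNat + 1, by omega, by omega, (a - 1) / n, ?_⟩
  have := Int.mul_ediv_add_emod (a - 1) n
  push_cast
  rw [Int.toNat_of_nonneg hnonneg]
  linarith

section AffinePermutation

variable {n : ℤ} {w : ℤ → ℤ}

theorem map_add_int_mul_of_map_add (hw : ∀ a, w (a + n) = w a + n) (a t : ℤ) :
    w (a + t * n) = w a + t * n := by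
  have hper : Periodic (fun a => w a - a) n := fun a => by simp only [hw]; ring
  have := hper.int_mul t a
  rw [Int.cast_id] at this
  linarith

theorem bijective_of_map_add_of_modEq (hn : n ≠ 0) (c : ℤ) (hw : ∀ a, w (a + n) = w a + n)
    (hc : ∀ a, w a ≡ a + c [ZMOD n]) : Bijective w := by
  refine ⟨fun a b hab => ?_, fun b => ?_⟩
  · obtain ⟨t, ht⟩ := (Int.ModEq.add_right_cancel' c ((hc a).symm.trans (hab ▸ hc b))).dvd
    have hb : b = a + t * n := by linarith
    have htn : t * n = 0 := by
      have := map_add_int_mul_of_map_add hw a t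
      rw [← hb, hab] at this
      linarith
    rw [hb, (mul_eq_zero.mp htn).resolve_right hn, zero_mul, add_zero]
  · obtain ⟨t, ht⟩ := (hc (b - c)).dvd
    refine ⟨b - c + t * n, ?_⟩
    rw [map_add_int_mul_of_map_add hw]
    linarith

end AffinePermutation

theorem wI_is_affine_Weyl_group_element_general
    (n ω k : ℕ) (hn : 1 ≤ n)
    (I : Finset ℕ) (hI : I ⊆ Finset.Icc 1 n) (hIcard : I.card = k)
    (w : ℤ → ℤ)
    (hw : ∀ (i : ℕ) (r : ℤ), 1 ≤ i → i ≤ n →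
      w ((i : ℤ) + r * n) =
        (i : ℤ) - k * ω + r * n + (if i ∈ I then (n : ℤ) * ω else 0)) :
    Function.Bijective w ∧
    (∀ a : ℤ, w (a + n) = w a + n) ∧
    (∑ i ∈ Finset.Icc (1 : ℤ) n, (w i - i)) = 0 := by
  have hshift (a : ℤ) : w (a + n) = w a + n := by
    obtain ⟨i, hi1, hin, r, rfl⟩ := Int.exists_eq_natCast_add_mul hn a
    rw [show (i : ℤ) + r * n + n = i + (r + 1) * n by ring, hw i _ hi1 hin, hw i _ hi1 hin]
    ring
  have hmod (a : ℤ) : w a ≡ a + -(k * ω : ℤ) [ZMOD n] := by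
    obtain ⟨i, hi1, hin, r, rfl⟩ := Int.exists_eq_natCast_add_mul hn a
    rw [hw i r hi1 hin, Int.modEq_iff_dvd]
    split_ifs
    · exact ⟨-ω, by ring⟩
    · exact ⟨0, by ring⟩
  have hterm (i : ℕ) (hi : i ∈ Icc 1 n) :
      w i - i = (if i ∈ I then (n : ℤ) * ω else 0) - k * ω := by
    have := hw i 0 (mem_Icc.mp hi).1 (mem_Icc.mp hi).2
    rw [zero_mul, add_zero] at this
    rw [this]
    ring
  refine ⟨bijective_of_map_add_of_modEq (by omega) _ hshift hmod, hshift, ?_⟩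
  rw [← Nat.cast_one, sum_Icc_natCast (fun i => w i - i), sum_congr rfl hterm, sum_sub_distrib,
    sum_ite_mem, inter_eq_right.mpr hI, sum_const, sum_const, hIcard, Nat.card_Icc]
  simp only [add_tsub_cancel_right, nsmul_eq_mul]
  ring

/-- For `I ⊆ {1,…,n}` with `|I| = k`, the map `w : ℤ → ℤ` defined by
`w (i + rn) = i − kω + rn + nω·χ_I(i)` for `i ∈ {1,…,n}` and `r ∈ ℤ` is a bijection of
`ℤ` with `w (a+n) = w a + n` for all `a` and `Σ_{i=1}^n (w i − i) = 0`; that is, `w` is a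
`(0,n)` affine permutation, hence an element of the affine Weyl group of type
`A_{n−1}^{(1)}`. -/
theorem wI_is_affine_Weyl_group_element
    (n ω k : ℕ) (hn : 1 ≤ n) (hω : 1 ≤ ω) (hk : 1 ≤ k) (hkn : k ≤ n)
    (I : Finset ℕ) (hI : I ⊆ Finset.Icc 1 n) (hIcard : I.card = k)
    (w : ℤ → ℤ)
    (hw : ∀ (i : ℕ) (r : ℤ), 1 ≤ i → i ≤ n →
      w ((i : ℤ) + r * n) =
        (i : ℤ) - k * ω + r * n + (if i ∈ I then (n : ℤ) * ω else 0)) :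
    Function.Bijective w ∧
    (∀ a : ℤ, w (a + n) = w a + n) ∧
    (∑ i ∈ Finset.Icc (1 : ℤ) n, (w i - i)) = 0 :=
  wI_is_affine_Weyl_group_element_general n ω k hn I hI hIcard w hw
end

section
/- Let 1 ≤ k ≤ n and ω ≥ 1 be integers and let I ⊆ {1,…,n} with |I| = k. For i₀ ∈ ℤ/nℤ define J_{i₀} := {1 + d(i₀,i) + n(r−1) : i ∈ I, 1 ≤ r ≤ ω}, where d(i₀,i) ∈ {0,1,…,n−1} denotes the residue of i₀ − i modulo n. Then each J_{i₀} is a subset of {1,…,ωn} of cardinality kω, and the tuple (J_{i₀})_{i₀ ∈ ℤ/nℤ} is a (k,n,ω) juggling pattern. -/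
/-!
Write `j = m + 1`. Since `x.val + n * t` with `x.val < n` is the division of `m` by `n` with
remainder, `j ∈ J_{i₀}` says exactly that `m < ωn` and `m ≡ i₀ - i (mod n)` for some `i ∈ I`.
Passing from `j` to `j + 1` therefore passes from `i₀` to `i₀ + 1`. Uniqueness of division with
remainder, together with the injectivity of `I ⊆ {1,…,n} → ℤ/nℤ`, shows that distinct pairs
`(i, r)` give distinct elements, whence `|J_{i₀}| = kω`.
-/

namespace ZMod

variable {n : ℕ}

theorem natCast_injOn_Icc_one : Set.InjOn (Nat.cast : ℕ → ZMod n) (Finset.Icc 1 n) := by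
  intro a ha b hb h
  simp only [Finset.coe_Icc, Set.mem_Icc] at ha hb
  exact ((natCast_eq_natCast_iff a b n).mp h).eq_of_abs_lt (by rw [abs_lt]; omega)

variable [NeZero n]

theorem val_add_mul_eq_iff (x : ZMod n) (t m : ℕ) :
    x.val + n * t = m ↔ m / n = t ∧ (m : ZMod n) = x := by
  rw [← natCast_zmod_val x, natCast_eq_natCast_iff', val_natCast,
    Nat.mod_eq_of_lt x.val_lt, Nat.div_mod_unique (NeZero.pos n)]
  exact and_iff_left x.val_lt |>.symm

theorem eq_and_eq_of_val_add_mul_eq {x y : ZMod n} {s t : ℕ}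
    (h : x.val + n * s = y.val + n * t) : x = y ∧ s = t := by
  obtain ⟨hs, hx⟩ := (val_add_mul_eq_iff x s _).mp h
  obtain ⟨ht, hy⟩ := (val_add_mul_eq_iff y t _).mp rfl
  exact ⟨hx.symm.trans hy, hs.symm.trans ht⟩

theorem exists_lt_val_add_mul_eq_iff (x : ZMod n) (ω m : ℕ) :
    (∃ t < ω, x.val + n * t = m) ↔ m < ω * n ∧ (m : ZMod n) = x := by
  simp only [val_add_mul_eq_iff, ← Nat.div_lt_iff_lt_mul (NeZero.pos n)]
  constructor
  · rintro ⟨t, ht, rfl, hx⟩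
    exact ⟨ht, hx⟩
  · rintro ⟨ht, hx⟩
    exact ⟨m / n, ht, rfl, hx⟩

end ZMod

def jugglingSet (n ω : ℕ) (I : Finset ℕ) (i₀ : ZMod n) : Finset ℕ :=
  (I ×ˢ Finset.Icc 1 ω).image fun p => 1 + (i₀ - (p.1 : ZMod n)).val + n * (p.2 - 1)

namespace jugglingSet

variable {n ω : ℕ} [NeZero n] {I : Finset ℕ}

theorem mem_iff {i₀ : ZMod n} {j : ℕ} :
    j ∈ jugglingSet n ω I i₀ ↔
      j ∈ Finset.Icc 1 (ω * n) ∧ ∃ i ∈ I, ((j - 1 : ℕ) : ZMod n) = i₀ - i := by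
  simp only [jugglingSet, Finset.mem_image, Finset.mem_product, Finset.mem_Icc, Prod.exists]
  constructor
  · rintro ⟨i, r, ⟨hi, hr1, hrω⟩, rfl⟩
    obtain ⟨hlt, hcast⟩ :=
      (ZMod.exists_lt_val_add_mul_eq_iff (i₀ - (i : ZMod n)) ω _).mp ⟨r - 1, by omega, rfl⟩
    refine ⟨⟨by omega, by omega⟩, i, hi, ?_⟩
    rwa [Nat.add_assoc, Nat.add_sub_cancel_left]
  · rintro ⟨⟨hj1, hjω⟩, i, hi, hcast⟩
    obtain ⟨t, ht, hjt⟩ :=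
      (ZMod.exists_lt_val_add_mul_eq_iff (i₀ - (i : ZMod n)) ω (j - 1)).mpr ⟨by omega, hcast⟩
    exact ⟨i, t + 1, ⟨hi, by omega, by omega⟩, by rw [Nat.add_sub_cancel]; omega⟩

theorem subset_Icc (i₀ : ZMod n) : jugglingSet n ω I i₀ ⊆ Finset.Icc 1 (ω * n) :=
  fun _ hj => (mem_iff.mp hj).1

theorem add_one_mem {i₀ : ZMod n} {j : ℕ} (hj : j ∈ jugglingSet n ω I i₀) (hlt : j < ω * n) :
    j + 1 ∈ jugglingSet n ω I (i₀ + 1) := by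
  obtain ⟨hj, i, hi, hji⟩ := mem_iff.mp hj
  rw [Finset.mem_Icc] at hj
  refine mem_iff.mpr ⟨Finset.mem_Icc.mpr ⟨by omega, by omega⟩, i, hi, ?_⟩
  obtain ⟨m, rfl⟩ : ∃ m, j = m + 1 := ⟨j - 1, by omega⟩
  simp only [Nat.add_sub_cancel, Nat.cast_add, Nat.cast_one] at hji ⊢
  rw [hji]
  ring

theorem card_eq (hI : I ⊆ Finset.Icc 1 n) (i₀ : ZMod n) :
    (jugglingSet n ω I i₀).card = I.card * ω := by
  rw [jugglingSet, Finset.card_image_of_injOn, Finset.card_product, Nat.card_Icc,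
    Nat.add_sub_cancel]
  rintro ⟨i, r⟩ hp ⟨i', r'⟩ hp' h
  simp only [Finset.coe_product, Set.mem_prod, Finset.mem_coe, Finset.mem_Icc] at hp hp'
  have hdiv : (i₀ - (i : ZMod n)).val + n * (r - 1) = (i₀ - (i' : ZMod n)).val + n * (r' - 1) := by
    simp only at h
    omega
  obtain ⟨hsub, hr⟩ := ZMod.eq_and_eq_of_val_add_mul_eq hdiv
  have hi : i = i' := ZMod.natCast_injOn_Icc_one (hI hp.1) (hI hp'.1) (sub_right_injective hsub)
  rw [hi, show r = r' by omega]

end jugglingSet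

theorem fixed_point_of_component_is_juggling_pattern_general
    (n ω k : ℕ) [NeZero n]
    (I : Finset ℕ) (hI : I ⊆ Finset.Icc 1 n) (hIcard : I.card = k)
    (J : ZMod n → Finset ℕ)
    (hJ : ∀ i₀ : ZMod n, J i₀ =
      (I ×ˢ Finset.Icc 1 ω).image fun p =>
        1 + (i₀ - (p.1 : ZMod n)).val + n * (p.2 - 1)) :
    (∀ i₀ : ZMod n, J i₀ ⊆ Finset.Icc 1 (ω * n)) ∧
    (∀ i₀ : ZMod n, (J i₀).card = k * ω) ∧
    (∀ i₀ : ZMod n, ∀ j ∈ J i₀, j < ω * n → j + 1 ∈ J (i₀ + 1)) := by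
  obtain rfl : J = jugglingSet n ω I := funext hJ
  exact ⟨jugglingSet.subset_Icc, hIcard ▸ jugglingSet.card_eq hI,
    fun _ _ => jugglingSet.add_one_mem⟩

/-- For `I ⊆ {1,…,n}` with `|I| = k`, the sets
`J_{i₀} = {1 + d(i₀,i) + n(r−1) : i ∈ I, 1 ≤ r ≤ ω}` (where `d(i₀,i) ∈ {0,…,n−1}` is the
residue of `i₀ − i` modulo `n`) are subsets of `{1,…,ωn}` of cardinality `kω`, and the
tuple `(J_{i₀})_{i₀ ∈ ℤ/nℤ}` is a `(k,n,ω)` juggling pattern. -/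
theorem fixed_point_of_component_is_juggling_pattern
    (n ω k : ℕ) [NeZero n] (hω : 1 ≤ ω) (hk : 1 ≤ k) (hkn : k ≤ n)
    (I : Finset ℕ) (hI : I ⊆ Finset.Icc 1 n) (hIcard : I.card = k)
    (J : ZMod n → Finset ℕ)
    (hJ : ∀ i₀ : ZMod n, J i₀ =
      (I ×ˢ Finset.Icc 1 ω).image fun p =>
        1 + (i₀ - (p.1 : ZMod n)).val + n * (p.2 - 1)) :
    (∀ i₀ : ZMod n, J i₀ ⊆ Finset.Icc 1 (ω * n)) ∧
    (∀ i₀ : ZMod n, (J i₀).card = k * ω) ∧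
    (∀ i₀ : ZMod n, ∀ j ∈ J i₀, j < ω * n → j + 1 ∈ J (i₀ + 1)) :=
  fixed_point_of_component_is_juggling_pattern_general n ω k I hI hIcard J hJ
end

section
/- Let 1 ≤ k ≤ n and ω ≥ 1 be integers and let I ⊆ {1,…,n} with |I| = k. For i₀ ∈ {1,…,n} set R_{i₀} := {1 + d(i₀,i) + nr : i ∈ I, 0 ≤ r ≤ ω−1}, where d(i₀,i) ∈ {0,1,…,n−1} denotes the residue of i₀ − i modulo n, and extend to all i ∈ ℤ by R_{i+n} = R_i. For i ∈ ℤ set S_i := {i − kω + nω + 1 − r : r ∈ R_i} ∪ {m ∈ ℤ : m ≤ i − kω}. Then for every i ∈ ℤ one has S_{i−1} ⊆ S_i, and S_i \ S_{i−1} is the singleton {i − kω} if the representative of i modulo n in {1,…,n} does not lie in I, and the singleton {i − kω + nω} if it does. -/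
/-- For `I ⊆ {1,…,n}` with `|I| = k`, let
`R_{i₀} = {1 + d(i₀,a) + nr : a ∈ I, 0 ≤ r ≤ ω−1}` for `i₀ ∈ {1,…,n}`, extended
`n`-periodically to all `i ∈ ℤ`, and set
`S_i = {i − kω + nω + 1 − r : r ∈ R_i} ∪ {m : m ≤ i − kω}`. Then `S_{i−1} ⊆ S_i` for all
`i`, and `S_i \ S_{i−1}` is the singleton `{i − kω + nω}` if the representative of `i`
modulo `n` in `{1,…,n}` lies in `I`, and `{i − kω}` otherwise. -/
theorem fixed_point_image_in_affine_flag
    (n ω k : ℕ) [NeZero n] (hω : 1 ≤ ω) (hk : 1 ≤ k) (hkn : k ≤ n)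
    (I : Finset ℕ) (hI : I ⊆ Finset.Icc 1 n) (hIcard : I.card = k)
    (R : ℤ → Set ℕ)
    (hR : ∀ i₀ : ℕ, 1 ≤ i₀ → i₀ ≤ n →
      R (i₀ : ℤ) = {x | ∃ a ∈ I, ∃ r : ℕ, r < ω ∧
        x = 1 + ((i₀ : ZMod n) - (a : ZMod n)).val + n * r})
    (hRper : ∀ i : ℤ, R (i + n) = R i)
    (S : ℤ → Set ℤ)
    (hS : ∀ i : ℤ, S i =
      {x | ∃ r ∈ R i, x = i - k * ω + n * ω + 1 - r} ∪ {m : ℤ | m ≤ i - k * ω}) :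
    ∀ i : ℤ,
      S (i - 1) ⊆ S i ∧
      ((∃ a ∈ I, ((a : ℤ) : ZMod n) = (i : ZMod n)) →
        S i \ S (i - 1) = {i - k * ω + n * ω}) ∧
      ((¬ ∃ a ∈ I, ((a : ℤ) : ZMod n) = (i : ZMod n)) →
        S i \ S (i - 1) = {i - k * ω}) := by
  have hn0 : 0 < (n:ℤ) := by exact_mod_cast Nat.pos_of_ne_zero (NeZero.ne n)
  have hω1 : (1:ℤ) ≤ (ω:ℤ) := by exact_mod_cast hω
  have hnω : (1:ℤ) ≤ (n:ℤ) * (ω:ℤ) := by nlinarith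
  -- periodicity over all multiples
  have hRper' : ∀ (i t : ℤ), R (i + n * t) = R i := by
    intro i t
    induction t using Int.induction_on with
    | zero => simp
    | succ m ih =>
        have h1 : i + (n:ℤ) * ((m:ℤ) + 1) = (i + n * m) + n := by ring
        rw [h1, hRper, ih]
    | pred m ih =>
        have h1 : (i + (n:ℤ) * (-(m:ℤ) - 1)) + n = i + n * (-(m:ℤ)) := by ring
        have h2 := hRper (i + (n:ℤ) * (-(m:ℤ) - 1))
        rw [h1] at h2
        rw [← h2]; exact ih
  -- representative
  have hrep : ∀ i : ℤ, ∃ i₀ : ℕ, 1 ≤ i₀ ∧ i₀ ≤ n ∧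
      ((i₀:ℤ) : ZMod n) = ((i:ℤ) : ZMod n) ∧ R i = R (i₀:ℤ) := by
    intro i
    have hm0 : 0 ≤ (i - 1) % n := Int.emod_nonneg _ (by positivity)
    have hmlt : (i - 1) % n < n := Int.emod_lt_of_pos _ hn0
    have hde : (n:ℤ) * ((i - 1) / n) + (i - 1) % n = i - 1 := Int.mul_ediv_add_emod _ _
    have hieq : ((((i - 1) % n).toNat + 1 : ℕ) : ℤ) + (n:ℤ) * ((i - 1) / n) = i := by
      push_cast
      omega
    refine ⟨((i - 1) % n).toNat + 1, Nat.le_add_left 1 _, by omega, ?_, ?_⟩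
    · have h0 : ((i - ((((i - 1) % n).toNat + 1 : ℕ) : ℤ) : ℤ) : ZMod n) = 0 := by
        apply (ZMod.intCast_zmod_eq_zero_iff_dvd _ n).mpr
        exact ⟨(i - 1) / n, by push_cast; omega⟩
      push_cast at h0 ⊢
      linear_combination -h0
    · have h1 := hRper' (((((i - 1) % n).toNat + 1 : ℕ) : ℤ)) ((i - 1) / n)
      rw [hieq] at h1
      exact h1
  -- membership characterization
  have hmem : ∀ (i x : ℤ), x ∈ S i ↔ (x ≤ i - k*ω ∨
      (i - k*ω < x ∧ x ≤ i - k*ω + n*ω ∧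
        ∃ a ∈ I, ((x + k*ω : ℤ) : ZMod n) = ((a:ℕ) : ZMod n))) := by
    intro i x
    obtain ⟨i₀, h1, h2, hcast, hReq⟩ := hrep i
    rw [hS, hReq, hR i₀ h1 h2]
    simp only [Set.mem_union, Set.mem_setOf_eq]
    have hcast' : ((i₀ : ℕ) : ZMod n) = ((i : ℤ) : ZMod n) := by
      push_cast at hcast ⊢; exact hcast
    constructor
    · rintro (⟨r, ⟨a, ha, r', hr', rfl⟩, rfl⟩ | hx)
      · right
        set d := ((i₀ : ZMod n) - (a : ZMod n)).val with hd
        have hdlt : d < n := ZMod.val_lt _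
        have hdval : ((d:ℕ) : ZMod n) = (i₀ : ZMod n) - (a : ZMod n) := by
          rw [hd]; simp [ZMod.natCast_val, ZMod.cast_id]
        have hkey : (d:ℤ) + (n:ℤ) * (r':ℤ) < (n:ℤ) * (ω:ℤ) := by
          have h3 : (r':ℤ) + 1 ≤ (ω:ℤ) := by exact_mod_cast hr'
          have h4 : (n:ℤ) * ((r':ℤ) + 1) ≤ (n:ℤ) * (ω:ℤ) :=
            mul_le_mul_of_nonneg_left h3 (le_of_lt hn0)
          have h5 : (d:ℤ) < n := by exact_mod_cast hdlt
          nlinarith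
        have hd0 : (0:ℤ) ≤ (d:ℤ) := Int.natCast_nonneg d
        have hr0 : (0:ℤ) ≤ (n:ℤ) * (r':ℤ) := by positivity
        refine ⟨by push_cast; linarith, by push_cast; linarith, a, ha, ?_⟩
        push_cast
        rw [hdval, hcast']
        linear_combination ((ω:ZMod n) - ((r':ℕ):ZMod n)) * ZMod.natCast_self n
      · exact Or.inl hx
    · rintro (hx | ⟨hx1, hx2, a, ha, hcond⟩)
      · exact Or.inr hx
      · left
        set d := ((i₀ : ZMod n) - (a : ZMod n)).val with hd
        have hdlt : d < n := ZMod.val_lt _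
        have hdlt' : (d:ℤ) < n := by exact_mod_cast hdlt
        have hd0 : (0:ℤ) ≤ (d:ℤ) := Int.natCast_nonneg d
        have hdval : ((d:ℕ) : ZMod n) = (i₀ : ZMod n) - (a : ZMod n) := by
          rw [hd]; simp [ZMod.natCast_val, ZMod.cast_id]
        set m : ℤ := i - k*ω + n*ω - x with hm
        have hm0 : 0 ≤ m := by rw [hm]; linarith
        have hmlt : m < (n:ℤ) * ω := by rw [hm]; linarith
        have hz : ((i - k*ω + n*ω - x - (d:ℤ) : ℤ) : ZMod n) = 0 := by
          push_cast at hcond ⊢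
          rw [hdval, hcast']
          linear_combination -hcond + (ω : ZMod n) * ZMod.natCast_self n
        have hdvd : (n:ℤ) ∣ (m - (d:ℤ)) := by
          rw [hm]
          exact (ZMod.intCast_zmod_eq_zero_iff_dvd _ n).mp hz
        obtain ⟨t, ht⟩ := hdvd
        have ht0 : 0 ≤ t := by
          by_contra hcon
          push_neg at hcon
          have h3 : t ≤ -1 := by omega
          have h4 : (n:ℤ) * t ≤ (n:ℤ) * (-1) :=
            mul_le_mul_of_nonneg_left h3 (le_of_lt hn0)
          linarith
        have htω : t < (ω:ℤ) := by
          by_contra hcon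
          push_neg at hcon
          have h4 : (n:ℤ) * ω ≤ (n:ℤ) * t :=
            mul_le_mul_of_nonneg_left hcon (le_of_lt hn0)
          linarith
        have htn : (t.toNat : ℤ) = t := Int.toNat_of_nonneg ht0
        refine ⟨1 + d + n * t.toNat, ⟨a, ha, t.toNat, by omega, rfl⟩, ?_⟩
        push_cast [htn]
        linarith [ht, hm]
  intro i
  refine ⟨?_, ?_, ?_⟩
  · intro x hx
    rw [hmem] at hx ⊢
    rcases hx with h | ⟨h1, h2, a, ha, hc⟩
    · exact Or.inl (by linarith)
    · rcases le_or_gt x (i - k*ω) with h' | h'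
      · exact Or.inl h'
      · exact Or.inr ⟨h', by linarith, a, ha, hc⟩
  · rintro ⟨a, ha, hac⟩
    ext x
    simp only [Set.mem_diff, Set.mem_singleton_iff, hmem]
    constructor
    · rintro ⟨hx, hnx⟩
      rcases hx with h | ⟨h1, h2, b, hb, hc⟩
      · exfalso
        apply hnx
        rcases le_or_gt x (i - 1 - k*ω) with h' | h'
        · exact Or.inl h'
        · have hxeq : x = i - k*ω := le_antisymm h (by linarith)
          refine Or.inr ⟨by linarith, by linarith, a, ha, ?_⟩
          subst hxeq
          push_cast at hac ⊢
          linear_combination -hac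
      · rcases le_or_gt x (i - 1 - k*ω + n*ω) with h' | h'
        · exact absurd (Or.inr ⟨by linarith, h', b, hb, hc⟩) hnx
        · exact le_antisymm h2 (by linarith)
    · rintro rfl
      refine ⟨Or.inr ⟨by linarith, le_refl _, a, ha, ?_⟩, ?_⟩
      · push_cast at hac ⊢
        linear_combination -hac + (ω : ZMod n) * ZMod.natCast_self n
      · rintro (h | ⟨h1, h2, b, hb, hc⟩)
        · linarith
        · linarith
  · intro hnc
    ext x
    simp only [Set.mem_diff, Set.mem_singleton_iff, hmem]
    constructor
    · rintro ⟨hx, hnx⟩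
      rcases hx with h | ⟨h1, h2, b, hb, hc⟩
      · rcases le_or_gt x (i - 1 - k*ω) with h' | h'
        · exact absurd (Or.inl h') hnx
        · exact le_antisymm h (by linarith)
      · exfalso
        rcases le_or_gt x (i - 1 - k*ω + n*ω) with h' | h'
        · exact hnx (Or.inr ⟨by linarith, h', b, hb, hc⟩)
        · have hxeq : x = i - k*ω + n*ω := le_antisymm h2 (by linarith)
          apply hnc
          refine ⟨b, hb, ?_⟩
          subst hxeq
          push_cast at hc ⊢
          linear_combination -hc + (ω : ZMod n) * ZMod.natCast_self n
    · rintro rfl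
      refine ⟨Or.inl (le_refl _), ?_⟩
      rintro (h | ⟨h1, h2, b, hb, hc⟩)
      · linarith
      · apply hnc
        refine ⟨b, hb, ?_⟩
        push_cast at hc ⊢
        linear_combination -hc
end

section
/- Let P = ℂ[a,b] be the polynomial ring in two variables and consider the three 3×3 matrices over P: G₁ with rows (1,0,0), (a,1,0), (b,a,1); G₂ with rows (0,1,0), (0,a,1), (1,b,a); and G₃ with rows (0,0,1), (1,0,a), (a,1,b). For each function u : {1,2,3} → {1,2,3} define the triple m_u := (∏_{c-th entry}) ∈ P³ whose c-th component (c = 1,2,3) is the product (G_c)_{u(1),1}·(G_c)_{u(2),2}·(G_c)_{u(3),3}. Then the ℂ-linear span of the 27 elements {m_u : u ∈ {1,2,3}^{3}} inside P³ has dimension exactly 10. -/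
/-!
Each of the 27 restricted monomials either vanishes on all three cells or is one of ten explicit
triples (fourteen vanish, three coincide with others). Each component of these triples is a
combination of `1, a, a², b, ab`, and evaluating at a few points of `ℂ²` shows that the ten
triples are linearly independent.
-/

open MvPolynomial

section CellMonomials

variable {R : Type*} [Semiring R]

def cellMatrix (a b : R) : Fin 3 → Matrix (Fin 3) (Fin 3) R :=
  ![!![1, 0, 0; a, 1, 0; b, a, 1], !![0, 1, 0; 0, a, 1; 1, b, a], !![0, 0, 1; 1, 0, a; a, 1, b]]

def cellMonomial (a b : R) (u : Fin 3 → Fin 3) (c : Fin 3) : R :=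
  cellMatrix a b c (u 0) 0 * cellMatrix a b c (u 1) 1 * cellMatrix a b c (u 2) 2

def cellBasisExponent : Fin 10 → Fin 3 → Fin 3 :=
  ![![0, 1, 2], ![0, 2, 2], ![1, 2, 0], ![1, 2, 1], ![1, 2, 2],
    ![2, 0, 1], ![2, 0, 2], ![2, 1, 2], ![2, 2, 1], ![2, 2, 2]]

def cellMonomialBasis (a b : R) : Fin 10 → Fin 3 → R :=
  ![![1, 0, 0], ![a, 0, 0], ![0, 0, 1], ![0, 0, a], ![a * a, 0, b],
    ![0, 1, 0], ![0, a, 0], ![b, a * a, 0], ![0, b, a * a], ![b * a, b * a, a * b]]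

theorem cellMonomial_cellBasisExponent (a b : R) (j : Fin 10) :
    cellMonomial a b (cellBasisExponent j) = cellMonomialBasis a b j := by
  fin_cases j <;> funext c <;> fin_cases c <;>
    simp [cellMonomial, cellMatrix, cellBasisExponent, cellMonomialBasis]

theorem cellMonomial_mem_insert_zero_range (a b : R) (u : Fin 3 → Fin 3) :
    cellMonomial a b u ∈ insert 0 (Set.range (cellMonomialBasis a b)) := by
  obtain ⟨i, j, k, rfl⟩ : ∃ i j k, u = ![i, j, k] :=
    ⟨u 0, u 1, u 2, by ext n; fin_cases n <;> rfl⟩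
  simp only [cellMonomialBasis, Matrix.range_cons, Matrix.range_empty, Set.mem_empty_iff_false,
    Set.mem_insert_iff, Set.mem_union, Set.mem_singleton_iff]
  fin_cases i <;> fin_cases j <;> fin_cases k <;>
    repeat first
      | (left; funext c; fin_cases c <;> simp [cellMonomial, cellMatrix]; done)
      | right

theorem range_cellMonomial (a b : R) :
    Set.range (cellMonomial a b) = insert 0 (Set.range (cellMonomialBasis a b)) := by
  refine (Set.range_subset_iff.2 (cellMonomial_mem_insert_zero_range a b)).antisymm
    (Set.insert_subset ⟨![0, 0, 0], ?_⟩ ?_)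
  · funext c
    fin_cases c <;> simp [cellMonomial, cellMatrix]
  · rintro _ ⟨j, rfl⟩
    exact ⟨_, cellMonomial_cellBasisExponent a b j⟩

end CellMonomials

theorem coeffs_eq_zero_of_forall_eq_zero {K : Type*} [Field K] [CharZero K]
    {p q r s t : K} (h : ∀ x y : K, p + q * x + r * x ^ 2 + s * y + t * (x * y) = 0) :
    p = 0 ∧ q = 0 ∧ r = 0 ∧ s = 0 ∧ t = 0 := by
  have h00 := h 0 0
  have h10 := h 1 0
  have h20 := h (-1) 0
  have h01 := h 0 1
  have h11 := h 1 1
  refine ⟨?_, ?_, ?_, ?_, ?_⟩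
  · linear_combination h00
  · linear_combination (h10 - h20) / 2
  · linear_combination (h10 + h20) / 2 - h00
  · linear_combination h01 - h00
  · linear_combination h11 - h10 - h01 + h00

theorem linearIndependent_cellMonomialBasis (K : Type*) [Field K] [CharZero K] :
    LinearIndependent K (cellMonomialBasis (X 0 : MvPolynomial (Fin 2) K) (X 1)) := by
  rw [Fintype.linearIndependent_iff]
  intro g hg
  have hev (c : Fin 3) (x y : K) := congr_arg (eval ![x, y]) (congr_fun hg c)
  simp only [Fin.forall_fin_succ, Fin.sum_univ_succ, cellMonomialBasis, Finset.sum_apply,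
    Pi.smul_apply, Matrix.cons_val', Matrix.cons_val_fin_one, Matrix.cons_val_zero,
    Matrix.cons_val_succ, Matrix.cons_val_one, Fin.succ_zero_eq_one, Fin.succ_one_eq_two,
    Fin.reduceSucc, Finset.univ_unique, Fin.default_eq_zero, Finset.sum_singleton, smul_eval,
    Pi.zero_apply, map_add, map_zero, map_one, map_mul, eval_X, mul_one, mul_zero, zero_add,
    forall_const] at hev
  obtain ⟨hev0, hev1, hev2⟩ := hev
  obtain ⟨h0, h1, h4, h7, h9⟩ := coeffs_eq_zero_of_forall_eq_zero (p := g 0) (q := g 1)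
    (r := g 4) (s := g 7) (t := g 9) fun x y => by linear_combination hev0 x y
  obtain ⟨h5, h6, -, h8, -⟩ := coeffs_eq_zero_of_forall_eq_zero (p := g 5) (q := g 6)
    (r := g 7) (s := g 8) (t := g 9) fun x y => by linear_combination hev1 x y
  obtain ⟨h2, h3, -, -, -⟩ := coeffs_eq_zero_of_forall_eq_zero (p := g 2) (q := g 3)
    (r := g 8) (s := g 4) (t := g 9) fun x y => by linear_combination hev2 x y
  intro j
  fin_cases j <;> assumption

/-- Let `P = ℂ[a,b]` and let `G₁, G₂, G₃` be the three `3 × 3` matrices over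
`P` parameterizing the dense cells of the three irreducible components of `X(1,3)`. For
each `u : {1,2,3} → {1,2,3}`, let `m_u ∈ P³` be the triple whose `c`-th component is
`(G_c)_{u(1),1} · (G_c)_{u(2),2} · (G_c)_{u(3),3}`. Then the `ℂ`-linear span of the `27`
elements `m_u` in `P³` has dimension exactly `10`. -/
theorem degree_111_component_has_dimension_ten
    (a b : MvPolynomial (Fin 2) ℂ)
    (ha : a = MvPolynomial.X 0) (hb : b = MvPolynomial.X 1)
    (G : Fin 3 → Matrix (Fin 3) (Fin 3) (MvPolynomial (Fin 2) ℂ))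
    (hG0 : G 0 = !![1, 0, 0; a, 1, 0; b, a, 1])
    (hG1 : G 1 = !![0, 1, 0; 0, a, 1; 1, b, a])
    (hG2 : G 2 = !![0, 0, 1; 1, 0, a; a, 1, b]) :
    Module.finrank ℂ
      (Submodule.span ℂ
        (Set.range fun u : Fin 3 → Fin 3 =>
          (fun c : Fin 3 => G c (u 0) 0 * G c (u 1) 1 * G c (u 2) 2))) = 10 := by
  obtain rfl : G = cellMatrix a b := by
    funext c
    fin_cases c
    exacts [hG0, hG1, hG2]
  subst ha hb
  change Module.finrank ℂ (Submodule.span ℂ (Set.range (cellMonomial (X 0) (X 1)))) = 10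
  rw [range_cellMonomial, Submodule.span_insert_zero,
    finrank_span_eq_card (linearIndependent_cellMonomialBasis ℂ), Fintype.card_fin]
end
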